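/- arXiv:2110.10618 — 3 statements merged into one kernel-verified Lean document; each statement's English description precedes it below -/
import Mathlib

section
/- Let S = ⟨m, n_1, ..., n_{m-1}⟩ be a maximal embedding dimension numerical semigroup with m ≥ 3 prime. Then S is bland: LD(S) = 1/max Δ(S). Moreover, if am is the smallest Betti element divisible by m, then max Δ(S) = a - 2. -/
open Finset

namespace LengthDensity

/-- The set of factorizations of `n` with respect to generators `g`. -/
def facs {k : ℕ} (g : Fin k → ℕ) (n : ℕ) : Set (Fin k → ℕ) :=
  {z | ∑ i, z i * g i = n}

/-- Membership in the numerical semigroup generated by `g`. -/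
def mem {k : ℕ} (g : Fin k → ℕ) (n : ℕ) : Prop := (facs g n).Nonempty

/-- The set of factorization lengths of `n`. -/
def lengthSet {k : ℕ} (g : Fin k → ℕ) (n : ℕ) : Set ℕ :=
  (fun z => ∑ i, z i) '' facs g n

/-- Length density of an element. -/
noncomputable def LD {k : ℕ} (g : Fin k → ℕ) (n : ℕ) : ℝ :=
  (((lengthSet g n).ncard : ℝ) - 1) /
    (((sSup (lengthSet g n) : ℕ) : ℝ) - ((sInf (lengthSet g n) : ℕ) : ℝ))

/-- Length density of the semigroup: infimum of `LD` over elements with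
non-singleton length set. -/
noncomputable def LDsgp {k : ℕ} (g : Fin k → ℕ) : ℝ :=
  sInf {x : ℝ | ∃ n : ℕ, 2 ≤ (lengthSet g n).ncard ∧ x = LD g n}

/-- The delta set (successive gaps) of a set of naturals. -/
def deltaOf (L : Set ℕ) : Set ℕ :=
  {d | ∃ a ∈ L, ∃ b ∈ L, a < b ∧ (∀ c ∈ L, ¬(a < c ∧ c < b)) ∧ d = b - a}

/-- The delta set of an element. -/
def delta {k : ℕ} (g : Fin k → ℕ) (n : ℕ) : Set ℕ := deltaOf (lengthSet g n)

/-- The delta set of the semigroup. -/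
def Delta {k : ℕ} (g : Fin k → ℕ) : Set ℕ := ⋃ n : ℕ, delta g n

/-- Adjacency in the factorization graph of `n`: two factorizations of `n`
sharing a positive coordinate. -/
def adj {k : ℕ} (g : Fin k → ℕ) (n : ℕ) (z z' : Fin k → ℕ) : Prop :=
  z ∈ facs g n ∧ z' ∈ facs g n ∧ ∃ i, 0 < z i ∧ 0 < z' i

/-- `n` is a Betti element: its factorization graph is disconnected. -/
def IsBetti {k : ℕ} (g : Fin k → ℕ) (n : ℕ) : Prop :=
  ∃ z ∈ facs g n, ∃ z' ∈ facs g n, ¬ Relation.ReflTransGen (adj g n) z z'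

/-- The semigroup is tasty: `LD(S) > 1 / max Δ(S)`. -/
def Tasty {k : ℕ} (g : Fin k → ℕ) : Prop := LDsgp g > 1 / ((sSup (Delta g) : ℕ) : ℝ)

/-- The semigroup is bland: `LD(S) = 1 / max Δ(S)`. -/
def Bland {k : ℕ} (g : Fin k → ℕ) : Prop := LDsgp g = 1 / ((sSup (Delta g) : ℕ) : ℝ)

/-- `g` is a minimal generating set: no generator is a nonnegative integer
combination of the others. -/
def IsMinGen {k : ℕ} (g : Fin k → ℕ) : Prop :=
  ∀ i, ¬ ∃ z : Fin k → ℕ, z i = 0 ∧ ∑ j, z j * g j = g i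

/-- `n` is a non-atom of the semigroup generated by `g`:
it is a sum of two nonzero elements. -/
def NonAtom {k : ℕ} (g : Fin k → ℕ) (n : ℕ) : Prop :=
  ∃ a b : ℕ, 0 < a ∧ 0 < b ∧ mem g a ∧ mem g b ∧ n = a + b

/-!
Index the generators by residues, `g i ≡ i (mod m)` with `g 0 = m`. Minimality of `g (p + q)`
gives `g (p + q) + m ≤ g p + g q` for all residues `p, q`: two atoms of a factorization can be
traded for the atom `p + q` plus `t ≥ 1` copies of `m`. Let `a * m` be the least of the sums
`g i + g (-i)`, `i ≠ 0`. Trading shows that a factorization without `m` of a multiple of `m` has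
value at least `(a + length - 2) * m`; hence `k * m` has the single factorization `k • m` for
`k < a`, while `a * m` has exactly the lengths `2` and `a` and a disconnected factorization graph.
So `a * m` is the least Betti multiple of `m`, and `a - 2 ∈ Δ(S)`.

Conversely, all gaps are at most `a - 2`. In a minimal counterexample with consecutive lengths
`ℓ < ℓ'`, short and long factorizations have disjoint supports; trading inside them forces
`n = g p + g q = g (p + q) + t * m` with `t ≥ a`. Since `m` is prime, walking `u ↦ u - i`
through all residues, the sums `g u + g (p + q - u)` descend from `n` in steps of at most
`(a - 2) * m` and eventually drop below `n`, which produces a length of `n` in `(2, a]`.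
Bounded gaps give `LD(n) ≥ 1 / (a - 2)`, with equality at `n = a * m`.
-/

section Factorizations

variable {k : ℕ} (g : Fin k → ℕ)

def value (z : Fin k → ℕ) : ℕ := ∑ i, z i * g i

def length (z : Fin k → ℕ) : ℕ := ∑ i, z i

@[simp]
theorem value_add (z w : Fin k → ℕ) : value g (z + w) = value g z + value g w := by
  simp [value, add_mul, sum_add_distrib]

@[simp]
theorem value_single (i : Fin k) (c : ℕ) : value g (Pi.single i c) = c * g i := by
  simp [value, Pi.single_apply]

@[simp]
theorem value_zero : value g 0 = 0 := by
  simp [value]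

@[simp]
theorem length_add (z w : Fin k → ℕ) : length (z + w) = length z + length w := by
  simp [length, sum_add_distrib]

@[simp]
theorem length_single (i : Fin k) (c : ℕ) : length (Pi.single i c) = c := by
  simp [length, Pi.single_apply]

@[simp]
theorem length_zero : length (0 : Fin k → ℕ) = 0 := by
  simp [length]

theorem length_eq_zero {z : Fin k → ℕ} : length z = 0 ↔ z = 0 := by
  simp [length, sum_eq_zero_iff, funext_iff]

theorem mem_facs {n : ℕ} {z : Fin k → ℕ} : z ∈ facs g n ↔ value g z = n :=
  Iff.rfl

theorem mem_lengthSet {n ℓ : ℕ} : ℓ ∈ lengthSet g n ↔ ∃ z, value g z = n ∧ length z = ℓ :=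
  Iff.rfl

theorem length_mul_le_value {c : ℕ} (h : ∀ i, c ≤ g i) (z : Fin k → ℕ) :
    length z * c ≤ value g z := by
  simp only [length, value, sum_mul]
  exact sum_le_sum fun i _ => Nat.mul_le_mul_left _ (h i)

theorem length_le_value (h : ∀ i, 0 < g i) (z : Fin k → ℕ) : length z ≤ value g z := by
  simpa using length_mul_le_value g h z

theorem exists_eq_single_add_of_pos {z : Fin k → ℕ} {i : Fin k} (h : 0 < z i) :
    ∃ w : Fin k → ℕ, z = Pi.single i 1 + w := by
  refine ⟨z - Pi.single i 1, funext fun j => ?_⟩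
  by_cases hj : j = i
  · subst hj; simp only [Pi.add_apply, Pi.single_eq_same, Pi.sub_apply]; omega
  · simp [hj]

theorem exists_eq_single_add {z : Fin k → ℕ} (hz : z ≠ 0) :
    ∃ i, ∃ w : Fin k → ℕ, z = Pi.single i 1 + w := by
  obtain ⟨i, hi⟩ := Function.ne_iff.mp hz
  exact ⟨i, exists_eq_single_add_of_pos (Nat.pos_of_ne_zero hi)⟩

theorem exists_eq_single_add_single_add {z : Fin k → ℕ} (hz : 2 ≤ length z) :
    ∃ p q, ∃ w : Fin k → ℕ, z = Pi.single p 1 + Pi.single q 1 + w := by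
  obtain ⟨p, w, rfl⟩ := exists_eq_single_add (z := z) (by rintro rfl; simp [length] at hz)
  obtain ⟨q, w, rfl⟩ := exists_eq_single_add (z := w) (by rintro rfl; simp at hz)
  exact ⟨p, q, w, (add_assoc _ _ _).symm⟩

end Factorizations

section Gaps

theorem exists_mem_Ioo_of_deltaOf_le {L : Set ℕ} {d A B : ℕ} (hL : ∀ δ ∈ deltaOf L, δ ≤ d)
    (hAB : A + d < B) {x y : ℕ} (hx : x ∈ L) (hy : y ∈ L) (hxA : x ≤ A) (hBy : B ≤ y) :
    ∃ c ∈ L, A < c ∧ c < B := by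
  induction h : y - x using Nat.strong_induction_on generalizing x y with
  | _ e IH =>
  by_cases hc : ∃ c ∈ L, x < c ∧ c < y
  · obtain ⟨c, hcL, hxc, hcy⟩ := hc
    by_cases hcA : c ≤ A
    · exact IH (y - c) (by omega) hcL hy hcA hBy rfl
    by_cases hcB : B ≤ c
    · exact IH (c - x) (by omega) hx hcL hxA hcB rfl
    exact ⟨c, hcL, by omega, by omega⟩
  · have := hL (y - x) ⟨x, hx, y, hy, by omega, fun c hcL hxcy => hc ⟨c, hcL, hxcy⟩, rfl⟩
    omega

theorem deltaOf_subset_insert {L : Set ℕ} {b : ℕ} (hb : ∀ x ∈ L, x < b) :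
    deltaOf L ⊆ deltaOf (insert b L) := by
  rintro _ ⟨u, hu, v, hv, huv, hcons, rfl⟩
  refine ⟨u, .inr hu, v, .inr hv, huv, fun c hc => ?_, rfl⟩
  rcases hc with rfl | hc
  · have := hb v hv
    omega
  · exact hcons c hc

theorem sub_max'_mem_deltaOf_insert {s : Finset ℕ} (hne : s.Nonempty) {b : ℕ}
    (hb : ∀ x ∈ s, x < b) : b - s.max' hne ∈ deltaOf (insert b ↑s) := by
  refine ⟨s.max' hne, .inr (s.max'_mem hne), b, .inl rfl, hb _ (s.max'_mem hne),
    fun c hc hlt => ?_, rfl⟩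
  rcases hc with rfl | hc
  · exact lt_irrefl _ hlt.2
  · exact absurd (s.le_max' c hc) (not_le.mpr hlt.1)

theorem sub_le_ncard_sub_one_mul {L : Set ℕ} {d : ℕ} (hfin : L.Finite)
    (hL : ∀ δ ∈ deltaOf L, δ ≤ d) {x y : ℕ} (hx : x ∈ L) (hy : y ∈ L) :
    y - x ≤ (L.ncard - 1) * d := by
  obtain ⟨s, rfl⟩ := hfin.exists_finset_coe
  rw [Set.ncard_coe_finset]
  clear hfin
  induction s using Finset.induction_on_max generalizing x y with
  | empty => simp at hx
  | insert b s hb IH =>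
    rw [Finset.coe_insert] at hL hx hy
    have hs : ∀ δ ∈ deltaOf ↑s, δ ≤ d := fun δ hδ => hL δ (deltaOf_subset_insert hb hδ)
    rw [Finset.card_insert_of_notMem fun h => lt_irrefl b (hb b h)]
    rcases hy with rfl | hy <;> rcases hx with rfl | hx
    · simp
    · have hne : s.Nonempty := ⟨x, hx⟩
      have h₁ := hL _ (sub_max'_mem_deltaOf_insert hne hb)
      have h₂ := IH hs hx (s.max'_mem hne)
      have h₃ := s.le_max' x hx
      obtain ⟨c, hc⟩ := Nat.exists_eq_add_one_of_ne_zero hne.card_pos.ne'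
      rw [hc, add_tsub_cancel_right] at h₂
      rw [hc, add_tsub_cancel_right, add_one_mul]
      omega
    · have := hb y hy
      omega
    · exact (IH hs hx hy).trans (Nat.mul_le_mul_right _ (by omega))

theorem one_div_le_LD {k : ℕ} {g : Fin k → ℕ} {n d : ℕ} (hfin : (lengthSet g n).Finite)
    (hd : ∀ δ ∈ delta g n, δ ≤ d) (h2 : 2 ≤ (lengthSet g n).ncard) :
    1 / (d : ℝ) ≤ LD g n := by
  obtain ⟨x, y, hx, hy, hxy⟩ := (Set.one_lt_ncard_iff hfin).mp h2
  have hne : (lengthSet g n).Nonempty := ⟨x, hx⟩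
  have hlt : sInf (lengthSet g n) < sSup (lengthSet g n) := by
    rcases Nat.lt_or_gt_of_ne hxy with h | h
    · exact (csInf_le (OrderBot.bddBelow _) hx).trans_lt (h.trans_le (le_csSup hfin.bddAbove hy))
    · exact (csInf_le (OrderBot.bddBelow _) hy).trans_lt (h.trans_le (le_csSup hfin.bddAbove hx))
  have hbound := sub_le_ncard_sub_one_mul hfin hd (hne.csInf_mem hfin) (hne.csSup_mem hfin)
  have hd0 : d ≠ 0 := by
    rintro rfl
    rw [mul_zero] at hbound
    omega
  rw [LD, div_le_div_iff₀ (by positivity) (by simpa using hlt), one_mul]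
  have := (Nat.cast_le (α := ℝ)).mpr hbound
  push_cast [Nat.cast_sub hlt.le, Nat.cast_sub (by omega : 1 ≤ (lengthSet g n).ncard)] at this
  exact this

theorem bland_of_lengthSet_eq_pair {k : ℕ} {g : Fin k → ℕ} {d n₀ ℓ : ℕ} (hd : 0 < d)
    (hfin : ∀ n, (lengthSet g n).Finite) (hΔ : ∀ n, ∀ δ ∈ delta g n, δ ≤ d)
    (hn₀ : lengthSet g n₀ = {ℓ, ℓ + d}) : Bland g ∧ sSup (Delta g) = d := by
  have hmem : d ∈ delta g n₀ := by
    rw [delta, hn₀]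
    exact ⟨ℓ, by simp, ℓ + d, by simp, by omega, by simp, by omega⟩
  have hsSup : sSup (Delta g) = d :=
    IsGreatest.csSup_eq ⟨Set.mem_iUnion.mpr ⟨n₀, hmem⟩, fun δ hδ => by
      obtain ⟨n, hn⟩ := Set.mem_iUnion.mp hδ
      exact hΔ n δ hn⟩
  have hcard : (lengthSet g n₀).ncard = 2 := by
    rw [hn₀, Set.ncard_pair (by omega)]
  have hLD : LD g n₀ = 1 / d := by
    rw [LD, hcard, hn₀, csSup_pair, csInf_pair]
    norm_num
  refine ⟨?_, hsSup⟩
  rw [Bland, hsSup, LDsgp]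
  exact IsLeast.csInf_eq ⟨⟨n₀, hcard.ge, hLD.symm⟩, by
    rintro _ ⟨n, hn, rfl⟩
    exact one_div_le_LD (hfin n) (hΔ n) hn⟩

end Gaps

section WideGap

variable {k : ℕ} {g : Fin k → ℕ}

/-- A minimal counterexample to the bound `d` on the gaps of length sets. -/
structure IsMinimalWideGap (g : Fin k → ℕ) (d n ℓ ℓ' : ℕ) : Prop where
  lt : ℓ + d < ℓ'
  mem_left : ℓ ∈ lengthSet g n
  mem_right : ℓ' ∈ lengthSet g n
  le_or_le : ∀ c ∈ lengthSet g n, c ≤ ℓ ∨ ℓ' ≤ c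
  delta_le : ∀ n' < n, ∀ δ ∈ delta g n', δ ≤ d

/-- Removing a common generator would leave a smaller element whose lengths jump over
`(ℓ - 1, ℓ' - 1)`. -/
theorem IsMinimalWideGap.eq_zero_or_eq_zero {d n ℓ ℓ' : ℕ} (h : IsMinimalWideGap g d n ℓ ℓ')
    (hg : ∀ i, 0 < g i) {y y' : Fin k → ℕ} (hy : value g y = n) (hy' : value g y' = n)
    (hyℓ : length y ≤ ℓ) (hy'ℓ' : ℓ' ≤ length y') (j : Fin k) : y j = 0 ∨ y' j = 0 := by
  by_contra! hj
  obtain ⟨w, rfl⟩ := exists_eq_single_add_of_pos (Nat.pos_of_ne_zero hj.1)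
  obtain ⟨w', rfl⟩ := exists_eq_single_add_of_pos (Nat.pos_of_ne_zero hj.2)
  simp only [value_add, value_single, length_add, length_single, one_mul] at hy hy' hyℓ hy'ℓ'
  have hlt := h.lt
  obtain ⟨c, hc, hℓc, hcℓ'⟩ := exists_mem_Ioo_of_deltaOf_le (A := ℓ - 1) (B := ℓ' - 1)
    (h.delta_le (value g w) (by have := hg j; omega)) (by omega)
    ((mem_lengthSet g).2 ⟨w, rfl, rfl⟩) ((mem_lengthSet g).2 ⟨w', by omega, rfl⟩)
    (by omega) (by omega)
  obtain ⟨u, hu, rfl⟩ := (mem_lengthSet g).1 hc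
  have := h.le_or_le (1 + length u)
    ((mem_lengthSet g).2 ⟨Pi.single j 1 + u, by simp [hu, ← hy], by simp⟩)
  omega

end WideGap

theorem exists_and_not_succ {P : ℕ → Prop} {n : ℕ} (h0 : P 0) (hn : ¬ P n) :
    ∃ k, P k ∧ ¬ P (k + 1) := by
  by_contra! h
  exact hn (Nat.rec h0 h n)

section MaxEmbDim

open Fin.CommRing

variable {m : ℕ} [NeZero m] {g : Fin m → ℕ}

theorem exists_natCast_mul_eq (hp : m.Prime) {i : Fin m} (hi : i ≠ 0) (y : Fin m) :
    ∃ k : ℕ, (k : Fin m) * i = y := by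
  have := Fact.mk hp
  let e := ZMod.finEquiv m
  have hei : e i ≠ 0 := (map_ne_zero_iff e e.injective).mpr hi
  refine ⟨(e y * (e i)⁻¹).val, e.injective ?_⟩
  rw [map_mul, map_natCast, ZMod.natCast_zmod_val, inv_mul_cancel_right₀ hei]

theorem exists_add_mul_eq_of_natCast_eq {x y : ℕ} (hxy : x ≤ y) (h : (x : Fin m) = y) :
    ∃ q, x + q * m = y := by
  have hmod : x % m = y % m := by simpa using congrArg Fin.val h
  obtain ⟨q, hq⟩ := (Nat.modEq_iff_dvd' hxy).mp hmod
  exact ⟨q, by rw [mul_comm]; omega⟩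

/-- `g` lists the minimal generators `m, n₁, …, n_{m-1}` of a maximal embedding dimension
numerical semigroup of multiplicity `m`, indexed by their residues `nᵢ ≡ i (mod m)`. -/
structure IsMaxEmbDim (g : Fin m → ℕ) : Prop where
  apply_zero : g 0 = m
  natCast_apply (i : Fin m) : (g i : Fin m) = i
  lt_apply (i : Fin m) : i ≠ 0 → m < g i
  isMinGen : IsMinGen g

namespace IsMaxEmbDim

theorem le_apply (hS : IsMaxEmbDim g) (i : Fin m) : m ≤ g i := by
  by_cases hi : i = 0
  · rw [hi, hS.apply_zero]
  · exact (hS.lt_apply i hi).le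

theorem pos (hS : IsMaxEmbDim g) (i : Fin m) : 0 < g i :=
  (Nat.pos_of_neZero m).trans_le (hS.le_apply i)

theorem finite_lengthSet (hS : IsMaxEmbDim g) (n : ℕ) : (lengthSet g n).Finite := by
  refine (Set.finite_Iic n).subset ?_
  intro ℓ hℓ
  obtain ⟨z, rfl, rfl⟩ := (mem_lengthSet g).1 hℓ
  exact length_le_value g hS.pos z

theorem dvd_apply_iff (hS : IsMaxEmbDim g) {i : Fin m} : m ∣ g i ↔ i = 0 := by
  rw [← Fin.natCast_eq_zero, hS.natCast_apply]

theorem exists_add_eq (hS : IsMaxEmbDim g) (p q : Fin m) :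
    ∃ t, 0 < t ∧ g p + g q = g (p + q) + t * m := by
  have hcast : ((g (p + q) : ℕ) : Fin m) = ((g p + g q : ℕ) : Fin m) := by
    push_cast
    simp [hS.natCast_apply]
  have hlt : g (p + q) < g p + g q := by
    by_contra! hle
    obtain ⟨l, hl⟩ := exists_add_mul_eq_of_natCast_eq hle hcast.symm
    have h0 := hS.apply_zero
    by_cases hp0 : p = 0
    · subst hp0; rw [zero_add] at hl; omega
    by_cases hq0 : q = 0
    · subst hq0; rw [add_zero] at hl; omega
    by_cases hpq : p + q = 0
    · rw [hpq, h0] at hl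
      have := hS.lt_apply p hp0
      omega
    refine hS.isMinGen (p + q) ⟨Pi.single p 1 + Pi.single q 1 + Pi.single 0 l, ?_, ?_⟩
    · simp [hp0, hq0, hpq]
    · change value g _ = _
      simp [h0, ← hl]
  obtain ⟨t, ht⟩ := exists_add_mul_eq_of_natCast_eq hlt.le hcast
  exact ⟨t, Nat.pos_of_ne_zero (by rintro rfl; omega), ht.symm⟩

theorem apply_add_add_le (hS : IsMaxEmbDim g) (p q : Fin m) : g (p + q) + m ≤ g p + g q := by
  obtain ⟨t, ht, h⟩ := hS.exists_add_eq p q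
  have := Nat.le_mul_of_pos_left m ht
  omega

theorem exists_value_trade (hS : IsMaxEmbDim g) (p q : Fin m) (w : Fin m → ℕ) :
    ∃ t, 0 < t ∧ value g (Pi.single p 1 + Pi.single q 1 + w) =
      value g (Pi.single (p + q) 1 + Pi.single 0 t + w) := by
  obtain ⟨t, ht, h⟩ := hS.exists_add_eq p q
  exact ⟨t, ht, by simp [hS.apply_zero, h]⟩

theorem le_value_of_dvd (hS : IsMaxEmbDim g) {a : ℕ} (hpair : ∀ ρ ≠ 0, a * m ≤ g ρ + g (-ρ))
    {z : Fin m → ℕ} (hz0 : z 0 = 0) (hz : z ≠ 0) (hdvd : m ∣ value g z) :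
    2 ≤ length z ∧ (a + length z) * m ≤ value g z + 2 * m := by
  -- trading two atoms with nonzero residue sum lowers the value by at least `m` and the length
  -- by one; a pair of inverse residues is worth at least `a * m`
  induction hL : length z using Nat.strong_induction_on generalizing z with
  | _ L IH =>
  obtain ⟨p, w, rfl⟩ := exists_eq_single_add hz
  have hp0 : p ≠ 0 := by rintro rfl; simp at hz0
  obtain rfl | hw := eq_or_ne w 0
  · simp [hS.dvd_apply_iff, hp0] at hdvd
  obtain ⟨q, w, rfl⟩ := exists_eq_single_add hw
  have hq0 : q ≠ 0 := by rintro rfl; simp at hz0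
  have hw0 : w 0 = 0 := by simpa [hp0, hq0] using hz0
  rw [← add_assoc] at hdvd hL ⊢
  simp only [length_add, length_single] at hL
  refine ⟨by omega, ?_⟩
  obtain hpq | hpq := eq_or_ne (p + q) 0
  · obtain rfl : q = -p := eq_neg_of_add_eq_zero_right hpq
    have := hpair p hp0
    have := length_mul_le_value g hS.le_apply w
    simp only [value_add, value_single, one_mul]
    nlinarith
  · obtain ⟨t, ht, htrade⟩ := hS.exists_value_trade p q w
    set z' : Fin m → ℕ := Pi.single (p + q) 1 + w with hz'
    have hv : value g (Pi.single p 1 + Pi.single q 1 + w) = value g z' + t * m := by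
      rw [htrade, hz']; simp only [value_add, value_single, one_mul, hS.apply_zero]; ring
    obtain ⟨-, hb⟩ := IH (length z') (by simp only [hz', length_add, length_single]; omega)
      (by simp [hz', hpq, hw0])
      (fun h => by simpa [hz'] using congrFun h (p + q))
      (by rw [hv] at hdvd; exact (Nat.dvd_add_left (dvd_mul_left m t)).mp hdvd) rfl
    have := Nat.le_mul_of_pos_left m ht
    simp only [hz', length_add, length_single] at hb
    rw [hv, ← hL]
    nlinarith

theorem eq_single_zero_or_length_eq_two (hS : IsMaxEmbDim g) {a : ℕ}
    (hpair : ∀ ρ ≠ 0, a * m ≤ g ρ + g (-ρ))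
    {z : Fin m → ℕ} {k : ℕ} (hz : value g z = k * m) (hk : k ≤ a) :
    z = Pi.single 0 k ∨ k = a ∧ z 0 = 0 ∧ length z = 2 := by
  set r := Function.update z 0 0
  have hzr : z = Pi.single 0 (z 0) + r := by
    funext j; by_cases hj : j = 0 <;> simp [r, hj]
  rw [hzr] at hz
  simp only [value_add, value_single, hS.apply_zero] at hz
  obtain hr | hr := eq_or_ne r 0
  · left
    rw [hr, value_zero, add_zero] at hz
    rw [hzr, hr, add_zero, Nat.eq_of_mul_eq_mul_right (Nat.pos_of_neZero m) hz]
  · right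
    obtain ⟨h2, hb⟩ := hS.le_value_of_dvd hpair (by simp [r]) hr
      ((Nat.dvd_add_right (dvd_mul_left m _)).mp (hz ▸ dvd_mul_left m k))
    have hle : (a + length r + z 0) * m ≤ (k + 2) * m := by nlinarith
    have := Nat.le_of_mul_le_mul_right hle (Nat.pos_of_neZero m)
    have hlen : length z = z 0 + length r := by
      conv_lhs => rw [hzr]
      simp
    omega

theorem not_isBetti_mul (hS : IsMaxEmbDim g) {a : ℕ} (hpair : ∀ ρ ≠ 0, a * m ≤ g ρ + g (-ρ))
    {k : ℕ} (hk : k < a) : ¬ IsBetti g (k * m) := by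
  rintro ⟨z, hz, z', hz', hnot⟩
  have hz₁ := (hS.eq_single_zero_or_length_eq_two hpair hz hk.le).resolve_right (by omega)
  have hz₂ := (hS.eq_single_zero_or_length_eq_two hpair hz' hk.le).resolve_right (by omega)
  exact hnot (hz₁ ▸ hz₂ ▸ Relation.ReflTransGen.refl)

theorem lengthSet_mul (hS : IsMaxEmbDim g) {a : ℕ} (hpair : ∀ ρ ≠ 0, a * m ≤ g ρ + g (-ρ))
    {i : Fin m} (hia : g i + g (-i) = a * m) : lengthSet g (a * m) = {2, a} := by
  ext ℓ
  constructor
  · intro hℓ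
    obtain ⟨z, hz, rfl⟩ := (mem_lengthSet g).1 hℓ
    rcases hS.eq_single_zero_or_length_eq_two hpair hz le_rfl with rfl | ⟨-, -, h⟩ <;> simp [*]
  · rintro (rfl | rfl)
    · exact (mem_lengthSet g).2 ⟨Pi.single i 1 + Pi.single (-i) 1, by simp [hia], by simp⟩
    · exact (mem_lengthSet g).2 ⟨Pi.single 0 ℓ, by simp [hS.apply_zero], by simp⟩

theorem isBetti_mul (hS : IsMaxEmbDim g) {a : ℕ} (hpair : ∀ ρ ≠ 0, a * m ≤ g ρ + g (-ρ))
    {i : Fin m} (hi0 : i ≠ 0) (hia : g i + g (-i) = a * m) : IsBetti g (a * m) := by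
  have ha : a ≠ 0 := by
    rintro rfl
    have := hS.pos i
    omega
  refine ⟨Pi.single i 1 + Pi.single (-i) 1, (mem_facs g).2 (by simp [hia]),
    Pi.single 0 a, (mem_facs g).2 (by simp [hS.apply_zero]), fun hpath => ?_⟩
  suffices ∀ w, Relation.ReflTransGen (adj g (a * m)) (Pi.single i 1 + Pi.single (-i) 1) w →
      w 0 = 0 by simpa [ha] using this _ hpath
  intro w hw
  induction hw with
  | refl => simp [hi0, Ne.symm hi0]
  | tail _ hstep ih =>
    obtain ⟨-, hw', j, hj, hj'⟩ := hstep
    rcases hS.eq_single_zero_or_length_eq_two hpair hw' le_rfl with rfl | ⟨-, h0, -⟩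
    · obtain rfl : j = 0 := by by_contra hj0; simp [hj0] at hj'
      omega
    · exact h0

theorem exists_minimal_pair (hS : IsMaxEmbDim g) (hm : 1 < m) :
    ∃ i ≠ 0, ∃ a, 3 ≤ a ∧ g i + g (-i) = a * m ∧ ∀ ρ ≠ 0, a * m ≤ g ρ + g (-ρ) := by
  obtain ⟨i, hi, hmin⟩ := (univ.erase (0 : Fin m)).exists_min_image (fun ρ => g ρ + g (-ρ))
    ⟨⟨1, hm⟩, by simp [Fin.ext_iff]⟩
  have hi0 : i ≠ 0 := (mem_erase.mp hi).1
  have hdvd : m ∣ g i + g (-i) := by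
    rw [← Fin.natCast_eq_zero]
    push_cast
    simp [hS.natCast_apply]
  obtain ⟨a, ha⟩ := hdvd
  have h₁ := hS.lt_apply i hi0
  have h₂ := hS.lt_apply (-i) (neg_ne_zero.mpr hi0)
  refine ⟨i, hi0, a, ?_, by rw [ha, mul_comm], fun ρ hρ => ?_⟩
  · by_contra! h
    have : m * a ≤ m * 2 := Nat.mul_le_mul_left m (by omega)
    omega
  · rw [mul_comm, ← ha]
    exact hmin ρ (mem_erase.mpr ⟨hρ, mem_univ ρ⟩)

/-- Walk from `x` in steps `-i` until `D u := g u + g (s - u)` first drops below `D x`; this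
happens by `u = i`. Each step lowers `D` by at most `(a - 2) * m`, and `D u ≡ s (mod m)`. -/
theorem exists_apply_add_apply_sub_add_mul_eq (hS : IsMaxEmbDim g) (hp : m.Prime) {i : Fin m}
    {a : ℕ} (hi0 : i ≠ 0) (hia : g i + g (-i) = a * m) (s x : Fin m)
    (hx : g s + a * m ≤ g x + g (s - x)) :
    ∃ u q, 0 < q ∧ q + 2 ≤ a ∧ g u + g (s - u) + q * m = g x + g (s - x) := by
  set D : Fin m → ℕ := fun u => g u + g (s - u) with hD
  have hstep : ∀ u, D (u + i) + 2 * m ≤ D u + a * m := fun u => by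
    have h₁ := hS.apply_add_add_le u i
    have h₂ := hS.apply_add_add_le (s - u) (-i)
    simp only [hD, show s - (u + i) = s - u + -i by ring]
    omega
  have hend : D i < D x := by
    have := hS.apply_add_add_le s (-i)
    simp only [hD, ← sub_eq_add_neg] at this ⊢
    have := Nat.pos_of_neZero m
    omega
  obtain ⟨k₀, hk₀⟩ := exists_natCast_mul_eq hp hi0 (x - i)
  obtain ⟨k, hk, hk1⟩ := exists_and_not_succ (P := fun k => D x ≤ D (x - k * i)) (by simp)
    (n := k₀) (by simp only [hk₀, sub_sub_cancel, not_le]; exact hend)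
  simp only [not_le] at hk1
  have hu : x - k * i = x - (k + 1 : ℕ) * i + i := by push_cast; ring
  rw [hu] at hk
  have := hstep (x - (k + 1 : ℕ) * i)
  obtain ⟨q, hq⟩ := exists_add_mul_eq_of_natCast_eq (m := m) hk1.le (by
    simp only [hD]
    push_cast
    simp [hS.natCast_apply])
  refine ⟨x - (k + 1 : ℕ) * i, q, Nat.pos_of_ne_zero ?_, ?_, hq⟩
  · rintro rfl; omega
  · have : (q + 2) * m ≤ a * m := by nlinarith
    exact Nat.le_of_mul_le_mul_right this (Nat.pos_of_neZero m)

theorem exists_mem_lengthSet_mem_Ioc (hS : IsMaxEmbDim g) (hp : m.Prime) {i : Fin m} {a : ℕ}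
    (hi0 : i ≠ 0) (hia : g i + g (-i) = a * m) {p q : Fin m} (h : g (p + q) + a * m ≤ g p + g q) :
    ∃ ℓ ∈ lengthSet g (g p + g q), ℓ ∈ Set.Ioc 2 a := by
  obtain ⟨u, c, hc, hca, hu⟩ :=
    hS.exists_apply_add_apply_sub_add_mul_eq hp hi0 hia (p + q) p (by simpa using h)
  refine ⟨2 + c, (mem_lengthSet g).2 ⟨Pi.single u 1 + Pi.single (p + q - u) 1 + Pi.single 0 c,
    ?_, by simp⟩, by omega, by omega⟩
  rw [add_sub_cancel_left] at hu
  simp only [value_add, value_single, one_mul, hS.apply_zero]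
  omega

end IsMaxEmbDim

namespace IsMinimalWideGap

variable {d n ℓ ℓ' : ℕ}

theorem apply_zero_eq_zero (h : IsMinimalWideGap g d n ℓ ℓ') (hS : IsMaxEmbDim g)
    {y : Fin m → ℕ} (hy : value g y = n) (hyℓ : length y ≤ ℓ) : y 0 = 0 := by
  by_contra hy0
  obtain ⟨z, hz, hzℓ'⟩ := (mem_lengthSet g).1 h.mem_right
  have hz0 : z 0 = 0 := (h.eq_zero_or_eq_zero hS.pos hy hz hyℓ hzℓ'.ge 0).resolve_left hy0
  have hy1 : 1 ≤ length y := by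
    by_contra! h0
    exact hy0 (by simp [length_eq_zero.mp (Nat.lt_one_iff.mp h0)])
  have hlt := h.lt
  obtain ⟨p, q, w, rfl⟩ := exists_eq_single_add_single_add (z := z) (by omega)
  obtain ⟨t, ht, htrade⟩ := hS.exists_value_trade p q w
  have := h.eq_zero_or_eq_zero hS.pos hy (htrade ▸ hz) hyℓ
    (by simp only [length_add, length_single] at hzℓ' ⊢; omega) 0
  simp only [Pi.add_apply, Pi.single_eq_same] at this
  omega

theorem two_le_left (h : IsMinimalWideGap g d n ℓ ℓ') (hS : IsMaxEmbDim g) : 2 ≤ ℓ := by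
  obtain ⟨y, hy, rfl⟩ := (mem_lengthSet g).1 h.mem_left
  obtain ⟨z, hz, hzℓ'⟩ := (mem_lengthSet g).1 h.mem_right
  have hlt := h.lt
  by_contra! hy2
  have hyn : y ≠ 0 := by
    rintro rfl
    have := length_le_value g hS.pos z
    rw [value_zero] at hy
    omega
  obtain ⟨p, w, rfl⟩ := exists_eq_single_add hyn
  obtain rfl : w = 0 := length_eq_zero.mp (by simp only [length_add, length_single] at hy2; omega)
  have hzp := (h.eq_zero_or_eq_zero hS.pos hy hz le_rfl hzℓ'.ge p).resolve_left (by simp)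
  exact hS.isMinGen p ⟨z, hzp, by change value g z = g p; rw [hz, ← hy]; simp⟩

theorem left_lt_two {a : ℕ} (h : IsMinimalWideGap g (a - 2) n ℓ ℓ') (hS : IsMaxEmbDim g)
    (hp : m.Prime) {i : Fin m} (hi0 : i ≠ 0) (hia : g i + g (-i) = a * m) : ℓ < 2 := by
  by_contra! hℓ
  obtain ⟨y, hy, hyℓ⟩ := (mem_lengthSet g).1 h.mem_left
  have hlt := h.lt
  obtain ⟨p, q, w, rfl⟩ := exists_eq_single_add_single_add (hyℓ ▸ hℓ)
  replace hyℓ : length w + 2 = ℓ := by simp only [length_add, length_single] at hyℓ; omega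
  obtain ⟨t, ht, htrade⟩ := hS.exists_value_trade p q w
  set y' : Fin m → ℕ := Pi.single (p + q) 1 + Pi.single 0 t + w with hy'
  have hy'n : value g y' = n := htrade ▸ hy
  have hy'0 : y' 0 ≠ 0 := by simp only [hy', Pi.add_apply, Pi.single_eq_same]; omega
  have hlen : length y' = length w + 1 + t := by simp only [hy', length_add, length_single]; omega
  by_cases ht1 : t = 1
  · exact hy'0 (h.apply_zero_eq_zero hS hy'n (by omega))
  have hℓ' : ℓ' ≤ length y' :=
    (h.le_or_le _ ((mem_lengthSet g).2 ⟨y', hy'n, rfl⟩)).resolve_left (by omega)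
  obtain rfl | hw := eq_or_ne w 0
  · simp only [length_zero] at hlen hyℓ
    have hta : a * m ≤ t * m := Nat.mul_le_mul_right m (by omega)
    obtain ⟨c, hc, h2c, hca⟩ := hS.exists_mem_lengthSet_mem_Ioc hp hi0 hia (p := p) (q := q) (by
      simp only [hy', add_zero, value_add, value_single, one_mul, hS.apply_zero] at hy'n hy
      omega)
    rw [show g p + g q = n by simpa using hy] at hc
    have := h.le_or_le c hc
    omega
  · obtain ⟨j, hj⟩ := Function.ne_iff.mp hw
    rw [Pi.zero_apply] at hj
    have := h.eq_zero_or_eq_zero hS.pos hy hy'n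
      (by simp only [length_add, length_single]; omega) hℓ' j
    simp only [hy', Pi.add_apply] at this
    omega

end IsMinimalWideGap

theorem IsMaxEmbDim.delta_le (hS : IsMaxEmbDim g) (hp : m.Prime) {i : Fin m} {a : ℕ}
    (hi0 : i ≠ 0) (hia : g i + g (-i) = a * m) (n : ℕ) : ∀ δ ∈ delta g n, δ ≤ a - 2 := by
  induction n using Nat.strong_induction_on with
  | _ n IH =>
  rintro _ ⟨ℓ, hℓ, ℓ', hℓ', hlt, hcons, rfl⟩
  by_contra! hd
  have h : IsMinimalWideGap g (a - 2) n ℓ ℓ' :=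
    ⟨by omega, hℓ, hℓ', fun c hc => by have := hcons c hc; omega, IH⟩
  exact absurd (h.two_le_left hS) (not_le.mpr (h.left_lt_two hS hp hi0 hia))

end MaxEmbDim

theorem stmt13 (m : ℕ) (hm : 3 ≤ m) (hp : Nat.Prime m) (g : Fin m → ℕ)
    (hg0 : g ⟨0, by omega⟩ = m)
    (hmod : ∀ i : Fin m, g i % m = (i : ℕ))
    (hbig : ∀ i : Fin m, (i : ℕ) ≠ 0 → m < g i)
    (hmin : IsMinGen g)
    (a : ℕ) (ha : IsBetti g (a * m))
    (hamin : ∀ a' : ℕ, IsBetti g (a' * m) → a ≤ a') :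
    Bland g ∧ sSup (Delta g) = a - 2 := by
  have : NeZero m := ⟨by omega⟩
  have hS : IsMaxEmbDim g :=
    ⟨hg0, fun i => Fin.ext (by simp [hmod]), fun i hi => hbig i (by simpa [Fin.val_eq_zero_iff]),
      hmin⟩
  obtain ⟨i, hi0, c, hc3, hic, hpair⟩ := hS.exists_minimal_pair (by omega)
  obtain rfl : a = c := le_antisymm (hamin c (hS.isBetti_mul hpair hi0 hic))
    (not_lt.mp fun h => hS.not_isBetti_mul hpair h ha)
  refine bland_of_lengthSet_eq_pair (n₀ := a * m) (ℓ := 2) (by omega) hS.finite_lengthSet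
    (hS.delta_le hp hi0 hic) ?_
  rw [hS.lengthSet_mul hpair hic, Nat.add_sub_cancel' (by omega)]
end LengthDensity
end

section
/- Let S = ⟨4, n_1, n_2, n_3⟩ be a maximal embedding dimension numerical semigroup with n_i ≡ i (mod 4) and min(n_1, n_2, n_3) ≠ n_2. Then S is bland: LD(S) = 1/max Δ(S). -/
/-!
Call a factorization of `n` in `⟨4, n1, n2, n3⟩` terminal if it uses at most one of `n1, n2, n3`;
the residue of `n` modulo `4` determines it. Any other factorization contains a pair `nᵢ + nⱼ`,
and the maximal embedding dimension inequalities give that pair a factorization using `4` which is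
at least as long and at most `D = min ((n1 + n3) / 4) (n2 / 2) - 2` longer; for `2 n1` and `2 n3`
this needs `min n1 n2 n3 ≠ n2`. Repeating such trades strictly increases the multiplicity of `4`,
so it ends at the terminal factorization, which is therefore the longest one, and the lengths met on
the way increase in steps of at most `D`. Hence consecutive lengths of every element differ by at
most `D`, giving `max Δ ≤ D` and `LD ≥ 1 / D` everywhere, and both are attained at
`min (n1 + n3) (2 n2)`, whose length set is `{2, 2 + D}`.
-/

open Finset

namespace LengthDensity

section Gaps

/-- For finite `L` this says `deltaOf L ⊆ Set.Iic D`, in a form suited to induction. -/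
def GapsAtMost (L : Set ℕ) (D : ℕ) : Prop :=
  ∀ a ∈ L, ∀ b ∈ L, a < b → ∃ c ∈ L, a < c ∧ c ≤ a + D

variable {L : Set ℕ} {D : ℕ}

theorem GapsAtMost.le_of_mem_deltaOf (h : GapsAtMost L D) {d : ℕ} (hd : d ∈ deltaOf L) :
    d ≤ D := by
  obtain ⟨a, ha, b, hb, hab, hnone, rfl⟩ := hd
  obtain ⟨c, hc, hac, hcD⟩ := h a ha b hb hab
  have := hnone c hc
  omega

theorem GapsAtMost.le_add_mul_ncard (hL : L.Finite) (h : GapsAtMost L D) {a b : ℕ}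
    (ha : a ∈ L) (hb : b ∈ L) : b ≤ a + D * {x ∈ L | a < x}.ncard := by
  by_cases hab : b ≤ a
  · omega
  obtain ⟨c, hc, hac, hcD⟩ := h a ha b hb (by omega)
  have hcard : {x ∈ L | c < x}.ncard + 1 ≤ {x ∈ L | a < x}.ncard := by
    refine Set.ncard_lt_ncard ?_ (hL.subset (Set.sep_subset L _))
    have hsub : {x ∈ L | c < x} ⊆ {x ∈ L | a < x} := fun x hx => ⟨hx.1, hac.trans hx.2⟩
    exact (Set.ssubset_iff_of_subset hsub).2 ⟨c, ⟨hc, hac⟩, fun hc' => lt_irrefl c hc'.2⟩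
  calc b ≤ c + D * {x ∈ L | c < x}.ncard := h.le_add_mul_ncard hL hc hb
    _ ≤ a + D * ({x ∈ L | c < x}.ncard + 1) := by rw [Nat.mul_succ]; omega
    _ ≤ a + D * {x ∈ L | a < x}.ncard := by gcongr
termination_by b - a

theorem GapsAtMost.sSup_sub_sInf_le (hL : L.Finite) (hne : L.Nonempty) (h : GapsAtMost L D) :
    sSup L - sInf L ≤ D * (L.ncard - 1) := by
  have hInf : sInf L ∈ L := Nat.sInf_mem hne
  have hcard : {x ∈ L | sInf L < x}.ncard ≤ L.ncard - 1 := by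
    rw [← Set.ncard_sdiff_singleton_of_mem hInf]
    exact Set.ncard_le_ncard (fun x hx => ⟨hx.1, hx.2.ne'⟩) hL.sdiff
  have := h.le_add_mul_ncard hL hInf (Nat.sSup_mem hne hL.bddAbove)
  have := Nat.mul_le_mul_left D hcard
  omega

end Gaps

section Generic

variable {k : ℕ} {g : Fin k → ℕ}

theorem lengthSet_finite (hg : ∀ i, 0 < g i) (n : ℕ) : (lengthSet g n).Finite := by
  refine (Set.finite_Iic n).subset ?_
  rintro _ ⟨z, hz, rfl⟩
  calc ∑ i, z i ≤ ∑ i, z i * g i :=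
        Finset.sum_le_sum fun i _ => Nat.le_mul_of_pos_right _ (hg i)
    _ = n := hz

theorem one_div_le_LD_s15 {n D : ℕ} (hfin : (lengthSet g n).Finite)
    (hcard : 2 ≤ (lengthSet g n).ncard) (h : GapsAtMost (lengthSet g n) D) :
    1 / (D : ℝ) ≤ LD g n := by
  set L := lengthSet g n
  obtain ⟨x, y, hx, hy, hxy⟩ := (Set.one_lt_ncard_iff hfin).1 hcard
  have hne : L.Nonempty := ⟨x, hx⟩
  have hspread : sInf L < sSup L := by
    rcases Nat.lt_or_gt_of_ne hxy with hlt | hlt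
    · exact (Nat.sInf_le hx).trans_lt (hlt.trans_le (le_csSup hfin.bddAbove hy))
    · exact (Nat.sInf_le hy).trans_lt (hlt.trans_le (le_csSup hfin.bddAbove hx))
  have hbound := h.sSup_sub_sInf_le hfin hne
  have hD : 0 < D := Nat.pos_of_ne_zero (by rintro rfl; omega)
  rw [LD, div_le_div_iff₀ (by exact_mod_cast hD) (sub_pos.2 (by exact_mod_cast hspread)),
    one_mul, ← Nat.cast_sub hspread.le, ← Nat.cast_pred (show 0 < L.ncard by omega)]
  exact_mod_cast hbound.trans_eq (mul_comm _ _)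

theorem bland_of_gapsAtMost {D n₀ ℓ : ℕ} (hg : ∀ i, 0 < g i)
    (hgap : ∀ n, GapsAtMost (lengthSet g n) D) (hD : 0 < D)
    (hn₀ : lengthSet g n₀ = {ℓ, ℓ + D}) : Bland g := by
  have hcard : (lengthSet g n₀).ncard = 2 := by rw [hn₀]; exact Set.ncard_pair (by omega)
  have hDelta : sSup (Delta g) = D := by
    refine IsGreatest.csSup_eq ⟨Set.mem_iUnion.2 ⟨n₀, ?_⟩, ?_⟩
    · rw [delta, hn₀]
      exact ⟨ℓ, by simp, ℓ + D, by simp, by omega, by rintro c (rfl | rfl) <;> omega, by omega⟩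
    · rintro d ⟨_, ⟨n, rfl⟩, hd⟩
      exact (hgap n).le_of_mem_deltaOf hd
  have hLD : LD g n₀ = 1 / D := by
    rw [LD, hcard, hn₀, csSup_pair, csInf_pair, max_eq_right (by omega), min_eq_left (by omega)]
    push_cast
    ring
  have hLDsgp : LDsgp g = 1 / D := by
    refine IsLeast.csInf_eq ⟨⟨n₀, hcard.ge, hLD.symm⟩, ?_⟩
    rintro _ ⟨n, hn, rfl⟩
    exact one_div_le_LD_s15 (lengthSet_finite hg n) hn (hgap n)
  rw [Bland, hLDsgp, hDelta]

end Generic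

section FourGenerated

variable {n1 n2 n3 : ℕ}

theorem mem_lengthSet_iff {n ℓ : ℕ} :
    ℓ ∈ lengthSet ![4, n1, n2, n3] n ↔
      ∃ t a b c, 4 * t + a * n1 + b * n2 + c * n3 = n ∧ t + a + b + c = ℓ := by
  simp only [lengthSet, facs, Set.mem_image, Set.mem_ofPred_eq, Fin.sum_univ_four,
    Matrix.cons_val_zero, Matrix.cons_val_one, Matrix.cons_val_two, Matrix.cons_val_three,
    Matrix.head_cons, Matrix.tail_cons]
  constructor
  · rintro ⟨z, hz, rfl⟩
    exact ⟨z 0, z 1, z 2, z 3, by rw [← hz]; ring, rfl⟩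
  · rintro ⟨t, a, b, c, h, rfl⟩
    exact ⟨![t, a, b, c], show t * 4 + a * n1 + b * n2 + c * n3 = n by omega, rfl⟩

structure IsMaxEmbDim_s15 (n1 n2 n3 : ℕ) : Prop where
  four_lt_n1 : 4 < n1
  four_lt_n2 : 4 < n2
  four_lt_n3 : 4 < n3
  n1_mod_four : n1 % 4 = 1
  n2_mod_four : n2 % 4 = 2
  n3_mod_four : n3 % 4 = 3
  n2_lt_two_mul_n1 : n2 < 2 * n1
  n3_lt_n1_add_n2 : n3 < n1 + n2
  n1_lt_n2_add_n3 : n1 < n2 + n3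
  n2_lt_two_mul_n3 : n2 < 2 * n3

/-- Trading `n1 + n3` or `2 * n2` for copies of `4` raises the length from `2` to `(n1 + n3) / 4`
or `n2 / 2`; the smaller gain is `max Δ`. -/
def maxGap (n1 n2 n3 : ℕ) : ℕ := min ((n1 + n3) / 4) (n2 / 2) - 2

theorem exists_pair_trade (hS : IsMaxEmbDim_s15 n1 n2 n3) (hmin : min n1 (min n2 n3) ≠ n2)
    {a b c : ℕ} (hs : a + b + c = 2) :
    ∃ u a' b' c', 4 * u + a' * n1 + b' * n2 + c' * n3 = a * n1 + b * n2 + c * n3 ∧ 0 < u ∧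
      2 ≤ u + a' + b' + c' ∧ u + a' + b' + c' ≤ 2 + maxGap n1 n2 n3 := by
  obtain ⟨_, _, _, _, _, _, _, _, _, _⟩ := hS
  unfold maxGap
  obtain ⟨rfl, rfl, rfl⟩ | ⟨rfl, rfl, rfl⟩ | ⟨rfl, rfl, rfl⟩ | ⟨rfl, rfl, rfl⟩ | ⟨rfl, rfl, rfl⟩ |
      ⟨rfl, rfl, rfl⟩ :
      (a = 2 ∧ b = 0 ∧ c = 0) ∨ (a = 1 ∧ b = 1 ∧ c = 0) ∨ (a = 1 ∧ b = 0 ∧ c = 1) ∨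
        (a = 0 ∧ b = 2 ∧ c = 0) ∨ (a = 0 ∧ b = 1 ∧ c = 1) ∨ (a = 0 ∧ b = 0 ∧ c = 2) := by
    omega
  -- If trading `2 * n1` for `n2` gains more than `maxGap`, then `n3 < n2 < n1`, and trading
  -- `2 * n1` for `2 * n3` gains less; symmetrically for `2 * n3`.
  · by_cases h : 2 * n1 + 4 ≤ 3 * n2
    · exact ⟨(2 * n1 - n2) / 4, 0, 1, 0, by omega, by omega, by omega, by omega⟩
    · exact ⟨(n1 - n3) / 2, 0, 0, 2, by omega, by omega, by omega, by omega⟩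
  · exact ⟨(n1 + n2 - n3) / 4, 0, 0, 1, by omega, by omega, by omega, by omega⟩
  · by_cases h : n1 + n3 ≤ 2 * n2
    · exact ⟨(n1 + n3) / 4, 0, 0, 0, by omega, by omega, by omega, by omega⟩
    · exact ⟨(n1 + n3 - 2 * n2) / 4, 0, 2, 0, by omega, by omega, by omega, by omega⟩
  · by_cases h : 2 * n2 ≤ n1 + n3
    · exact ⟨n2 / 2, 0, 0, 0, by omega, by omega, by omega, by omega⟩
    · exact ⟨(2 * n2 - n1 - n3) / 4, 1, 0, 1, by omega, by omega, by omega, by omega⟩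
  · exact ⟨(n2 + n3 - n1) / 4, 1, 0, 0, by omega, by omega, by omega, by omega⟩
  · by_cases h : 2 * n3 + 4 ≤ 3 * n2
    · exact ⟨(2 * n3 - n2) / 4, 0, 1, 0, by omega, by omega, by omega, by omega⟩
    · exact ⟨(n3 - n1) / 2, 2, 0, 0, by omega, by omega, by omega, by omega⟩

theorem exists_trade (hS : IsMaxEmbDim_s15 n1 n2 n3) (hmin : min n1 (min n2 n3) ≠ n2)
    {n t a b c : ℕ} (hx : 4 * t + a * n1 + b * n2 + c * n3 = n) (hs : 2 ≤ a + b + c) :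
    ∃ t' a' b' c', 4 * t' + a' * n1 + b' * n2 + c' * n3 = n ∧ t < t' ∧
      t + a + b + c ≤ t' + a' + b' + c' ∧
      t' + a' + b' + c' ≤ t + a + b + c + maxGap n1 n2 n3 := by
  obtain ⟨a₀, b₀, c₀, ha, hb, hc, hpair⟩ : ∃ a₀ b₀ c₀, a₀ ≤ a ∧ b₀ ≤ b ∧ c₀ ≤ c ∧
      a₀ + b₀ + c₀ = 2 :=
    ⟨min a 2, min b (2 - min a 2), 2 - min a 2 - min b (2 - min a 2), by omega⟩
  obtain ⟨u, a₁, b₁, c₁, htrade, hu, hlen, hlenD⟩ := exists_pair_trade hS hmin hpair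
  obtain ⟨a, rfl⟩ := Nat.exists_eq_add_of_le ha
  obtain ⟨b, rfl⟩ := Nat.exists_eq_add_of_le hb
  obtain ⟨c, rfl⟩ := Nat.exists_eq_add_of_le hc
  refine ⟨t + u, a + a₁, b + b₁, c + c₁, ?_, by omega, by omega, by omega⟩
  simp only [add_mul] at hx htrade ⊢
  omega

theorem length_eq_of_terminal (hm1 : n1 % 4 = 1) (hm2 : n2 % 4 = 2) (hm3 : n3 % 4 = 3)
    {n t a b c t' a' b' c' : ℕ} (hx : 4 * t + a * n1 + b * n2 + c * n3 = n)
    (hs : a + b + c ≤ 1) (hy : 4 * t' + a' * n1 + b' * n2 + c' * n3 = n)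
    (hs' : a' + b' + c' ≤ 1) : t' + a' + b' + c' = t + a + b + c := by
  have h01 : ∀ {a b c : ℕ}, a + b + c ≤ 1 → (a = 0 ∨ a = 1) ∧ (b = 0 ∨ b = 1) ∧ (c = 0 ∨ c = 1) :=
    by omega
  obtain ⟨rfl | rfl, rfl | rfl, rfl | rfl⟩ := h01 hs <;>
    obtain ⟨rfl | rfl, rfl | rfl, rfl | rfl⟩ := h01 hs' <;> omega

theorem length_le_of_terminal (hS : IsMaxEmbDim_s15 n1 n2 n3) (hmin : min n1 (min n2 n3) ≠ n2)
    {n t a b c t' a' b' c' : ℕ} (hx : 4 * t + a * n1 + b * n2 + c * n3 = n)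
    (hs : a + b + c ≤ 1) (hy : 4 * t' + a' * n1 + b' * n2 + c' * n3 = n) :
    t' + a' + b' + c' ≤ t + a + b + c := by
  by_cases hs' : a' + b' + c' ≤ 1
  · exact (length_eq_of_terminal hS.n1_mod_four hS.n2_mod_four hS.n3_mod_four hx hs hy hs').le
  obtain ⟨t'', a'', b'', c'', hy', ht, hlen, -⟩ := exists_trade hS hmin hy (by omega)
  exact hlen.trans (length_le_of_terminal hS hmin hx hs hy')
termination_by n - 4 * t'

theorem exists_length_gt_le_add_maxGap (hS : IsMaxEmbDim_s15 n1 n2 n3)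
    (hmin : min n1 (min n2 n3) ≠ n2) {n t a b c t' a' b' c' : ℕ}
    (hx : 4 * t + a * n1 + b * n2 + c * n3 = n) (hy : 4 * t' + a' * n1 + b' * n2 + c' * n3 = n)
    (hlt : t + a + b + c < t' + a' + b' + c') :
    ∃ T A B C, 4 * T + A * n1 + B * n2 + C * n3 = n ∧ t + a + b + c < T + A + B + C ∧
      T + A + B + C ≤ t + a + b + c + maxGap n1 n2 n3 := by
  by_cases hs : a + b + c ≤ 1
  · exact absurd (length_le_of_terminal hS hmin hx hs hy) (by omega)
  obtain ⟨t₁, a₁, b₁, c₁, hx₁, ht, hlen, hlenD⟩ := exists_trade hS hmin hx (by omega)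
  rcases hlen.lt_or_eq with hlen | hlen
  · exact ⟨t₁, a₁, b₁, c₁, hx₁, hlen, hlenD⟩
  · obtain ⟨T, A, B, C, hX, hgt, hle⟩ :=
      exists_length_gt_le_add_maxGap hS hmin hx₁ hy (by omega)
    exact ⟨T, A, B, C, hX, by omega, by omega⟩
termination_by n - 4 * t

theorem gapsAtMost_lengthSet (hS : IsMaxEmbDim_s15 n1 n2 n3) (hmin : min n1 (min n2 n3) ≠ n2)
    (n : ℕ) : GapsAtMost (lengthSet ![4, n1, n2, n3] n) (maxGap n1 n2 n3) := by
  intro ℓ hℓ ℓ' hℓ' hlt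
  obtain ⟨t, a, b, c, hx, rfl⟩ := mem_lengthSet_iff.1 hℓ
  obtain ⟨t', a', b', c', hy, rfl⟩ := mem_lengthSet_iff.1 hℓ'
  obtain ⟨T, A, B, C, hX, hgt, hle⟩ := exists_length_gt_le_add_maxGap hS hmin hx hy hlt
  exact ⟨_, mem_lengthSet_iff.2 ⟨T, A, B, C, hX, rfl⟩, hgt, hle⟩

theorem lengthSet_min_add_two_mul (hS : IsMaxEmbDim_s15 n1 n2 n3) :
    lengthSet ![4, n1, n2, n3] (min (n1 + n3) (2 * n2)) = {2, 2 + maxGap n1 n2 n3} := by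
  obtain ⟨_, _, _, _, _, _, _, _, _, _⟩ := hS
  unfold maxGap
  ext ℓ
  rw [mem_lengthSet_iff, Set.mem_insert_iff, Set.mem_singleton_iff]
  constructor
  · rintro ⟨t, a, b, c, hx, rfl⟩
    have ha : a < 4 := Nat.lt_of_mul_lt_mul_right (a := n1) (by omega)
    have hb : b < 3 := Nat.lt_of_mul_lt_mul_right (a := n2) (by omega)
    have hc : c < 4 := Nat.lt_of_mul_lt_mul_right (a := n3) (by omega)
    interval_cases a <;> interval_cases b <;> interval_cases c <;> omega
  · rintro (rfl | rfl)
    · by_cases h : n1 + n3 ≤ 2 * n2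
      · exact ⟨0, 1, 0, 1, by omega, rfl⟩
      · exact ⟨0, 0, 2, 0, by omega, rfl⟩
    · exact ⟨min (n1 + n3) (2 * n2) / 4, 0, 0, 0, by omega, by omega⟩

end FourGenerated

theorem stmt15 (n1 n2 n3 : ℕ) (h1 : 4 < n1) (h2 : 4 < n2) (h3 : 4 < n3)
    (hm1 : n1 % 4 = 1) (hm2 : n2 % 4 = 2) (hm3 : n3 % 4 = 3)
    (hc1 : n2 < 2 * n1) (hc2 : n3 < n1 + n2) (hc3 : n1 < n2 + n3)
    (hc4 : n2 < 2 * n3)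
    (hmin2 : min n1 (min n2 n3) ≠ n2) :
    Bland ![4, n1, n2, n3] := by
  have hS : IsMaxEmbDim_s15 n1 n2 n3 := ⟨h1, h2, h3, hm1, hm2, hm3, hc1, hc2, hc3, hc4⟩
  have hg : ∀ i, 0 < ![4, n1, n2, n3] i := fun i => by fin_cases i <;> dsimp <;> omega
  exact bland_of_gapsAtMost hg (gapsAtMost_lengthSet hS hmin2) (by unfold maxGap; omega)
    (lengthSet_min_add_two_mul hS)

end LengthDensity
end

section
/- Let S = ⟨4, n_1, n_2, n_3⟩ be a maximal embedding dimension numerical semigroup with n_i ≡ i (mod 4) and n_2 < n_1, n_2 < n_3. If 2n_1 + 2n_3 > n_2², then S is tasty: LD(S) > 1/max Δ(S). -/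
open Finset

namespace LengthDensity

private lemma mem_length {n1 n2 n3 n a b c d : ℕ}
    (h : a*4 + b*n1 + c*n2 + d*n3 = n) :
    a+b+c+d ∈ lengthSet ![4,n1,n2,n3] n := by
  refine ⟨![a,b,c,d], ?_, ?_⟩
  · show ∑ i, (![a,b,c,d] i) * (![4,n1,n2,n3] i) = n
    simp [Fin.sum_univ_four]
    omega
  · simp [Fin.sum_univ_four]

private lemma length_elim {n1 n2 n3 n ℓ : ℕ}
    (h : ℓ ∈ lengthSet ![4,n1,n2,n3] n) :
    ∃ a b c d, a*4 + b*n1 + c*n2 + d*n3 = n ∧ a+b+c+d = ℓ := by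
  obtain ⟨z, hz, hlen⟩ := h
  refine ⟨z 0, z 1, z 2, z 3, ?_, ?_⟩
  · have := hz
    simp only [facs, Set.mem_setOf_eq, Fin.sum_univ_four] at this
    simpa [mul_comm] using this
  · simpa [Fin.sum_univ_four] using hlen

private lemma class_mod {n1 n2 n3 n : ℕ} (hm1 : n1 % 4 = 1) (hm2 : n2 % 4 = 2)
    (hm3 : n3 % 4 = 3) {a b c d : ℕ} (h : a*4 + b*n1 + c*n2 + d*n3 = n) :
    (b + 2*c + 3*d) % 4 = n % 4 := by
  obtain ⟨a1, ha1⟩ : ∃ a1, n1 = 4*a1 + 1 := ⟨n1/4, by omega⟩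
  obtain ⟨a2, ha2⟩ : ∃ a2, n2 = 4*a2 + 2 := ⟨n2/4, by omega⟩
  obtain ⟨a3, ha3⟩ : ∃ a3, n3 = 4*a3 + 3 := ⟨n3/4, by omega⟩
  have key : n = 4*(a + b*a1 + c*a2 + d*a3) + (b + 2*c + 3*d) := by
    rw [← h, ha1, ha2, ha3]; ring
  omega

private lemma mul_ge {x y : ℕ} (h : 4 ≤ y) : 4*x ≤ x*y := by
  calc 4*x = x*4 := by ring
  _ ≤ x*y := Nat.mul_le_mul_left x h

private lemma wb1 {n1 n2 n3 : ℕ} (h1 : 4 < n1) (h2 : 4 < n2) (h3 : 4 < n3)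
    (hm1 : n1 % 4 = 1) (hm2 : n2 % 4 = 2) (hm3 : n3 % 4 = 3)
    (hc3 : n1 < n2 + n3) (hn2 : n2 < n3)
    (b c d : ℕ) (hcl : (b + 2*c + 3*d) % 4 = 1) :
    4*(b+c+d) + n1 ≤ b*n1 + c*n2 + d*n3 + 4 := by
  have hb4 : 4*b ≤ b*n1 := mul_ge h1.le
  have hc4 : 4*c ≤ c*n2 := mul_ge h2.le
  have hd4 : 4*d ≤ d*n3 := mul_ge h3.le
  have hdis : 1 ≤ b ∨ (1 ≤ c ∧ 1 ≤ d) ∨ 3 ≤ d := by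
    rcases Nat.lt_or_ge d 4 with hd' | hd'
    · interval_cases d <;> omega
    · omega
  rcases hdis with hb | ⟨hc, hd⟩ | hd
  · obtain ⟨b', rfl⟩ : ∃ b', b = b' + 1 := ⟨b - 1, by omega⟩
    have e1 : (b'+1)*n1 = b'*n1 + n1 := by ring
    have l1 : 4*b' ≤ b'*n1 := mul_ge h1.le
    linarith
  · obtain ⟨c', rfl⟩ : ∃ c', c = c' + 1 := ⟨c - 1, by omega⟩
    obtain ⟨d', rfl⟩ : ∃ d', d = d' + 1 := ⟨d - 1, by omega⟩
    have e1 : (c'+1)*n2 = c'*n2 + n2 := by ring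
    have e2 : (d'+1)*n3 = d'*n3 + n3 := by ring
    have l1 : 4*c' ≤ c'*n2 := mul_ge h2.le
    have l2 : 4*d' ≤ d'*n3 := mul_ge h3.le
    have key : n1 + 4 ≤ n2 + n3 := by omega
    linarith
  · obtain ⟨d', rfl⟩ : ∃ d', d = d' + 3 := ⟨d - 3, by omega⟩
    have e2 : (d'+3)*n3 = d'*n3 + 3*n3 := by ring
    have l2 : 4*d' ≤ d'*n3 := mul_ge h3.le
    have key : n1 + 8 ≤ 3*n3 := by omega
    linarith

private lemma wb2 {n1 n2 n3 : ℕ} (h1 : 4 < n1) (h2 : 4 < n2) (h3 : 4 < n3)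
    (hm1 : n1 % 4 = 1) (hm2 : n2 % 4 = 2) (hm3 : n3 % 4 = 3)
    (hc1 : n2 < 2*n1) (hc4 : n2 < 2*n3)
    (b c d : ℕ) (hcl : (b + 2*c + 3*d) % 4 = 2) :
    4*(b+c+d) + n2 ≤ b*n1 + c*n2 + d*n3 + 4 := by
  have hb4 : 4*b ≤ b*n1 := mul_ge h1.le
  have hc4' : 4*c ≤ c*n2 := mul_ge h2.le
  have hd4 : 4*d ≤ d*n3 := mul_ge h3.le
  have hdis : 1 ≤ c ∨ 2 ≤ b ∨ 2 ≤ d := by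
    rcases Nat.lt_or_ge d 2 with hd' | hd'
    · interval_cases d <;> omega
    · omega
  rcases hdis with hc | hb | hd
  · obtain ⟨c', rfl⟩ : ∃ c', c = c' + 1 := ⟨c - 1, by omega⟩
    have e1 : (c'+1)*n2 = c'*n2 + n2 := by ring
    have l1 : 4*c' ≤ c'*n2 := mul_ge h2.le
    linarith
  · obtain ⟨b', rfl⟩ : ∃ b', b = b' + 2 := ⟨b - 2, by omega⟩
    have e1 : (b'+2)*n1 = b'*n1 + 2*n1 := by ring
    have l1 : 4*b' ≤ b'*n1 := mul_ge h1.le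
    have key : n2 + 4 ≤ 2*n1 := by omega
    linarith
  · obtain ⟨d', rfl⟩ : ∃ d', d = d' + 2 := ⟨d - 2, by omega⟩
    have e1 : (d'+2)*n3 = d'*n3 + 2*n3 := by ring
    have l1 : 4*d' ≤ d'*n3 := mul_ge h3.le
    have key : n2 + 4 ≤ 2*n3 := by omega
    linarith

private lemma wb3 {n1 n2 n3 : ℕ} (h1 : 4 < n1) (h2 : 4 < n2) (h3 : 4 < n3)
    (hm1 : n1 % 4 = 1) (hm2 : n2 % 4 = 2) (hm3 : n3 % 4 = 3)
    (hc2 : n3 < n1 + n2) (hn1 : n2 < n1)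
    (b c d : ℕ) (hcl : (b + 2*c + 3*d) % 4 = 3) :
    4*(b+c+d) + n3 ≤ b*n1 + c*n2 + d*n3 + 4 := by
  have hb4 : 4*b ≤ b*n1 := mul_ge h1.le
  have hc4' : 4*c ≤ c*n2 := mul_ge h2.le
  have hd4 : 4*d ≤ d*n3 := mul_ge h3.le
  have hdis : 1 ≤ d ∨ (1 ≤ b ∧ 1 ≤ c) ∨ 3 ≤ b := by
    rcases Nat.lt_or_ge d 4 with hd' | hd'
    · interval_cases d <;> omega
    · omega
  rcases hdis with hd | ⟨hb, hc⟩ | hb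
  · obtain ⟨d', rfl⟩ : ∃ d', d = d' + 1 := ⟨d - 1, by omega⟩
    have e1 : (d'+1)*n3 = d'*n3 + n3 := by ring
    have l1 : 4*d' ≤ d'*n3 := mul_ge h3.le
    linarith
  · obtain ⟨b', rfl⟩ : ∃ b', b = b' + 1 := ⟨b - 1, by omega⟩
    obtain ⟨c', rfl⟩ : ∃ c', c = c' + 1 := ⟨c - 1, by omega⟩
    have e1 : (b'+1)*n1 = b'*n1 + n1 := by ring
    have e2 : (c'+1)*n2 = c'*n2 + n2 := by ring
    have l1 : 4*b' ≤ b'*n1 := mul_ge h1.le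
    have l2 : 4*c' ≤ c'*n2 := mul_ge h2.le
    have key : n3 + 4 ≤ n1 + n2 := by omega
    linarith
  · obtain ⟨b', rfl⟩ : ∃ b', b = b' + 3 := ⟨b - 3, by omega⟩
    have e1 : (b'+3)*n1 = b'*n1 + 3*n1 := by ring
    have l1 : 4*b' ≤ b'*n1 := mul_ge h1.le
    have key : n3 + 8 ≤ 3*n1 := by omega
    linarith

private lemma wb0 {n1 n2 n3 : ℕ} (h1 : 4 < n1) (h2 : 4 < n2) (h3 : 4 < n3)
    (b c d : ℕ) : 4*(b+c+d) ≤ b*n1 + c*n2 + d*n3 := by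
  have hb4 : 4*b ≤ b*n1 := mul_ge h1.le
  have hc4 : 4*c ≤ c*n2 := mul_ge h2.le
  have hd4 : 4*d ≤ d*n3 := mul_ge h3.le
  linarith

private lemma lengthSet_finite_s16 {n1 n2 n3 : ℕ} (h1 : 4 < n1) (h2 : 4 < n2) (h3 : 4 < n3)
    (n : ℕ) : (lengthSet ![4,n1,n2,n3] n).Finite := by
  apply (Set.finite_Iic n).subset
  intro ℓ hℓ
  obtain ⟨a, b, c, d, hv, hlen⟩ := length_elim hℓ
  have hb : b ≤ b*n1 := Nat.le_mul_of_pos_right b (by omega)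
  have hc : c ≤ c*n2 := Nat.le_mul_of_pos_right c (by omega)
  have hd : d ≤ d*n3 := Nat.le_mul_of_pos_right d (by omega)
  simp only [Set.mem_Iic]
  omega

set_option maxHeartbeats 1000000 in
private lemma ascent_lem {n1 n2 n3 q E dN k p P δ A2 Ep d2p D0 n A r e : ℕ}
    (h1 : 4 < n1) (h2 : 4 < n2) (h3 : 4 < n3)
    (hm1 : n1 % 4 = 1) (hm2 : n2 % 4 = 2) (hm3 : n3 % 4 = 3)
    (hc2 : n3 < n1 + n2) (hc3 : n1 < n2 + n3)
    (hqn2 : n2 = 2*q + 4) (hq1 : 1 ≤ q)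
    (hk : n1 + n3 = 4*k) (hE1 : E*(q+2) ≤ k) (hdN : k = E*q + 2 + dN) (hdNq : q + 1 ≤ dN)
    (hpP : (p = n1 ∧ P = n3) ∨ (p = n3 ∧ P = n1)) (hPp : P = p + 2*δ)
    (hδ1 : 1 ≤ δ) (hδq : δ ≤ q) (h2p : 2*p = 4*A2 + n2)
    (hEp1 : Ep*(q+2) ≤ A2) (hd2p : A2 = Ep*q + 1 + d2p) (hd2p1 : 1 ≤ d2p)
    (hdND : dN ≤ D0) (hd2pD : d2p ≤ D0) (hDq : q + 1 ≤ D0)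
    (hre : (n % 4 = 0 ∧ r = 0 ∧ e = 0) ∨ (n % 4 = 1 ∧ r = n1 ∧ e = 1) ∨
      (n % 4 = 2 ∧ r = n2 ∧ e = 1) ∨ (n % 4 = 3 ∧ r = n3 ∧ e = 1))
    (hA : n = 4*A + r) :
    ∀ ℓ ∈ lengthSet ![4,n1,n2,n3] n, ℓ < A + e →
      ∃ ℓ' ∈ lengthSet ![4,n1,n2,n3] n, ℓ < ℓ' ∧ ℓ' ≤ ℓ + D0 := by
  intro ℓ hℓ hlt
  obtain ⟨a,b,c,d,hv,hlen⟩ := length_elim hℓ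
  have hcl := class_mod hm1 hm2 hm3 hv
  by_cases hcc : 2 ≤ c
  · obtain ⟨c', rfl⟩ : ∃ c', c = c' + 2 := ⟨c - 2, by omega⟩
    have hval : (a + (q+2))*4 + b*n1 + c'*n2 + d*n3 = n := by
      have e1 : (c'+2)*n2 = c'*n2 + 2*n2 := by ring
      omega
    exact ⟨(a + (q+2)) + b + c' + d, mem_length hval, by omega, by omega⟩
  · push_neg at hcc
    by_cases hbd : 1 ≤ b ∧ 1 ≤ d
    · obtain ⟨hb1, hd1⟩ := hbd
      obtain ⟨b', rfl⟩ : ∃ b', b = b' + 1 := ⟨b-1, by omega⟩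
      obtain ⟨d', rfl⟩ : ∃ d', d = d' + 1 := ⟨d-1, by omega⟩
      obtain ⟨u, hu⟩ : ∃ u, k = E*(q+2) + u := ⟨k - E*(q+2), by omega⟩
      have hEexp : E*(q+2) = E*q + 2*E := by ring
      have hval : (a + u)*4 + b'*n1 + (c + 2*E)*n2 + d'*n3 = n := by
        have e1 : (b'+1)*n1 = b'*n1 + n1 := by ring
        have e2 : (d'+1)*n3 = d'*n3 + n3 := by ring
        have e3 : (c + 2*E)*n2 = c*n2 + 2*(E*n2) := by ring
        have e4 : E*n2 = 2*(E*(q+2)) := by rw [hqn2]; ring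
        omega
      exact ⟨(a + u) + b' + (c + 2*E) + d', mem_length hval, by omega, by omega⟩
    · by_cases hb2 : 2 ≤ b
      · obtain ⟨b', rfl⟩ : ∃ b', b = b' + 2 := ⟨b-2, by omega⟩
        rcases hpP with ⟨hp1, hP3⟩ | ⟨hp3, hP1⟩
        · obtain ⟨u2, hu2⟩ : ∃ u2, A2 = Ep*(q+2) + u2 := ⟨A2 - Ep*(q+2), by omega⟩
          have hEexp : Ep*(q+2) = Ep*q + 2*Ep := by ring
          have h2n1 : 2*n1 = 4*A2 + n2 := by rw [← hp1]; exact h2p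
          have hval : (a + u2)*4 + b'*n1 + (c + (2*Ep+1))*n2 + d*n3 = n := by
            have e1 : (b'+2)*n1 = b'*n1 + 2*n1 := by ring
            have e3 : (c + (2*Ep+1))*n2 = c*n2 + 2*(Ep*n2) + n2 := by ring
            have e4 : Ep*n2 = 2*(Ep*(q+2)) := by rw [hqn2]; ring
            omega
          exact ⟨(a + u2) + b' + (c + (2*Ep+1)) + d, mem_length hval, by omega, by omega⟩
        · have hn13 : n1 = n3 + 2*δ := by rw [← hP1, hPp, hp3]
          have hval : (a + δ)*4 + b'*n1 + c*n2 + (d + 2)*n3 = n := by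
            have e1 : (b'+2)*n1 = b'*n1 + 2*n1 := by ring
            have e2 : (d+2)*n3 = d*n3 + 2*n3 := by ring
            omega
          exact ⟨(a + δ) + b' + c + (d + 2), mem_length hval, by omega, by omega⟩
      · by_cases hd2 : 2 ≤ d
        · obtain ⟨d', rfl⟩ : ∃ d', d = d' + 2 := ⟨d-2, by omega⟩
          rcases hpP with ⟨hp1, hP3⟩ | ⟨hp3, hP1⟩
          · have hn31 : n3 = n1 + 2*δ := by rw [← hP3, hPp, hp1]
            have hval : (a + δ)*4 + (b + 2)*n1 + c*n2 + d'*n3 = n := by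
              have e1 : (b+2)*n1 = b*n1 + 2*n1 := by ring
              have e2 : (d'+2)*n3 = d'*n3 + 2*n3 := by ring
              omega
            exact ⟨(a + δ) + (b + 2) + c + d', mem_length hval, by omega, by omega⟩
          · obtain ⟨u2, hu2⟩ : ∃ u2, A2 = Ep*(q+2) + u2 := ⟨A2 - Ep*(q+2), by omega⟩
            have hEexp : Ep*(q+2) = Ep*q + 2*Ep := by ring
            have h2n3 : 2*n3 = 4*A2 + n2 := by rw [← hp3]; exact h2p
            have hval : (a + u2)*4 + b*n1 + (c + (2*Ep+1))*n2 + d'*n3 = n := by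
              have e2 : (d'+2)*n3 = d'*n3 + 2*n3 := by ring
              have e3 : (c + (2*Ep+1))*n2 = c*n2 + 2*(Ep*n2) + n2 := by ring
              have e4 : Ep*n2 = 2*(Ep*(q+2)) := by rw [hqn2]; ring
              omega
            exact ⟨(a + u2) + b + (c + (2*Ep+1)) + d', mem_length hval, by omega, by omega⟩
        · push_neg at hb2 hd2
          have hnotbd : ¬(1 ≤ b ∧ 1 ≤ d) := hbd
          have hbvals : b = 0 ∨ b = 1 := by omega
          have hdvals : d = 0 ∨ d = 1 := by omega
          have hcvals : c = 0 ∨ c = 1 := by omega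
          rcases hbvals with rfl|rfl <;> rcases hdvals with rfl|rfl <;>
            rcases hcvals with rfl|rfl
          · -- (b,d,c) = (0,0,0)
            exfalso
            norm_num at hcl hv
            rcases hre with ⟨h,hr,he⟩|⟨h,hr,he⟩|⟨h,hr,he⟩|⟨h,hr,he⟩ <;> omega
          · -- (0,0,1) : class 2, canonical
            exfalso
            norm_num at hcl hv
            rcases hre with ⟨h,hr,he⟩|⟨h,hr,he⟩|⟨h,hr,he⟩|⟨h,hr,he⟩ <;> omega
          · -- (0,1,0) : class 3, canonical
            exfalso
            norm_num at hcl hv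
            rcases hre with ⟨h,hr,he⟩|⟨h,hr,he⟩|⟨h,hr,he⟩|⟨h,hr,he⟩ <;> omega
          · -- (0,1,1) : class 1, trade n2+n3 → n1 + 4s
            norm_num at hcl hv
            rcases hre with ⟨h,hr,he⟩|⟨h,hr,he⟩|⟨h,hr,he⟩|⟨h,hr,he⟩
            · exact absurd hcl (by omega)
            · obtain ⟨s, hs1, hs2⟩ : ∃ s, n2 + n3 = n1 + 4*s ∧ 1 ≤ s :=
                ⟨(n2+n3-n1)/4, by omega, by omega⟩
              have hsq : s ≤ q + 1 := by omega
              have hval : (a + s)*4 + 1*n1 + 0*n2 + 0*n3 = n := by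
                norm_num
                omega
              exact ⟨(a+s) + 1 + 0 + 0, mem_length hval, by omega, by omega⟩
            · exact absurd hcl (by omega)
            · exact absurd hcl (by omega)
          · -- (1,0,0) : class 1, canonical
            exfalso
            norm_num at hcl hv
            rcases hre with ⟨h,hr,he⟩|⟨h,hr,he⟩|⟨h,hr,he⟩|⟨h,hr,he⟩ <;> omega
          · -- (1,0,1) : class 3, trade n1+n2 → n3 + 4t
            norm_num at hcl hv
            rcases hre with ⟨h,hr,he⟩|⟨h,hr,he⟩|⟨h,hr,he⟩|⟨h,hr,he⟩
            · exact absurd hcl (by omega)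
            · exact absurd hcl (by omega)
            · exact absurd hcl (by omega)
            · obtain ⟨t, hs1, hs2⟩ : ∃ t, n1 + n2 = n3 + 4*t ∧ 1 ≤ t :=
                ⟨(n1+n2-n3)/4, by omega, by omega⟩
              have hsq : t ≤ q + 1 := by omega
              have hval : (a + t)*4 + 0*n1 + 0*n2 + 1*n3 = n := by
                norm_num
                omega
              exact ⟨(a+t) + 0 + 0 + 1, mem_length hval, by omega, by omega⟩
          · exact absurd ⟨by omega, by omega⟩ hnotbd
          · exact absurd ⟨by omega, by omega⟩ hnotbd

set_option maxHeartbeats 2000000 in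
theorem stmt16 (n1 n2 n3 : ℕ) (h1 : 4 < n1) (h2 : 4 < n2) (h3 : 4 < n3)
    (hm1 : n1 % 4 = 1) (hm2 : n2 % 4 = 2) (hm3 : n3 % 4 = 3)
    (hc1 : n2 < 2 * n1) (hc2 : n3 < n1 + n2) (hc3 : n1 < n2 + n3)
    (hc4 : n2 < 2 * n3)
    (hn : n2 < n1 ∧ n2 < n3)
    (hbig : n2 ^ 2 < 2 * n1 + 2 * n3) :
    Tasty ![4, n1, n2, n3] := by
  -- basic arithmetic setup
  obtain ⟨hn1, hn3⟩ := hn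
  obtain ⟨q, hqn2, hq1⟩ : ∃ q, n2 = 2*q + 4 ∧ 1 ≤ q := ⟨(n2-4)/2, by omega, by omega⟩
  obtain ⟨k, hk⟩ : ∃ k, n1 + n3 = 4*k := ⟨(n1+n3)/4, by omega⟩
  obtain ⟨E, hE1, hE2⟩ : ∃ E, E*(q+2) ≤ k ∧ k < E*(q+2) + (q+2) := by
    refine ⟨k/(q+2), Nat.div_mul_le_self k (q+2), ?_⟩
    have := Nat.lt_div_mul_add (a := k) (b := q+2) (by omega)
    omega
  have hdNk : E*q + q + 3 ≤ k := by
    by_contra hcon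
    push_neg at hcon
    have hexp : E*(q+2) = E*q + 2*E := by ring
    have h2E : 2*E ≤ q + 2 := by omega
    have hmul : 2*(E*q) ≤ (q+2)*q := by
      calc 2*(E*q) = (2*E)*q := by ring
      _ ≤ (q+2)*q := Nat.mul_le_mul_right q h2E
    have hqq : (q+2)*(q+2) < 2*k := by
      have e0 : n2^2 = 4*((q+2)*(q+2)) := by rw [hqn2]; ring
      omega
    have e1 : (q+2)*(q+2) = q*q + 4*q + 4 := by ring
    have e2 : (q+2)*q = q*q + 2*q := by ring
    omega
  obtain ⟨dN, hdN, hdNq⟩ : ∃ dN, k = E*q + 2 + dN ∧ q + 1 ≤ dN := ⟨k - (E*q) - 2, by omega, by omega⟩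
  -- the p-side package
  obtain ⟨p, P, δ, A2, Ep, d2p, hpP, hPp, hδ1, hδq, h2p, hEp1, hEp2, hd2p⟩ :
      ∃ p P δ A2 Ep d2p, ((p = n1 ∧ P = n3) ∨ (p = n3 ∧ P = n1)) ∧ P = p + 2*δ ∧
        1 ≤ δ ∧ δ ≤ q ∧ 2*p = 4*A2 + n2 ∧ Ep*(q+2) ≤ A2 ∧ A2 < Ep*(q+2) + (q+2) ∧
        A2 = Ep*q + 1 + d2p ∧ 1 ≤ d2p := by
    have hne13 : n1 ≠ n3 := by omega
    have build : ∀ p : ℕ, p % 4 = 1 ∨ p % 4 = 3 → n2 < p →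
        ∃ A2 Ep d2p, 2*p = 4*A2 + n2 ∧ Ep*(q+2) ≤ A2 ∧ A2 < Ep*(q+2) + (q+2) ∧
          A2 = Ep*q + 1 + d2p ∧ 1 ≤ d2p := by
      intro p hp hpn2
      obtain ⟨A2, hA2⟩ : ∃ A2, 2*p = 4*A2 + n2 := ⟨(2*p - n2)/4, by omega⟩
      obtain ⟨Ep, hEp1, hEp2⟩ : ∃ Ep, Ep*(q+2) ≤ A2 ∧ A2 < Ep*(q+2) + (q+2) := by
        refine ⟨A2/(q+2), Nat.div_mul_le_self A2 (q+2), ?_⟩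
        have := Nat.lt_div_mul_add (a := A2) (b := q+2) (show 0 < q+2 by omega)
        omega
      have hbound : Ep*q + 2 ≤ A2 := by
        have hexp : Ep*(q+2) = Ep*q + 2*Ep := by ring
        rcases Nat.eq_zero_or_pos Ep with h0 | h0
        · subst h0; simp at hexp ⊢; omega
        · omega
      exact ⟨A2, Ep, A2 - (Ep*q) - 1, hA2, hEp1, hEp2, by omega, by omega⟩
    rcases Nat.lt_or_ge n1 n3 with hlt | hge
    · obtain ⟨A2, Ep, d2p, hh⟩ := build n1 (Or.inl hm1) hn1
      exact ⟨n1, n3, (n3-n1)/2, A2, Ep, d2p, Or.inl ⟨rfl, rfl⟩, by omega, by omega, by omega,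
        hh.1, hh.2.1, hh.2.2.1, hh.2.2.2.1, hh.2.2.2.2⟩
    · obtain ⟨A2, Ep, d2p, hh⟩ := build n3 (Or.inr hm3) hn3
      exact ⟨n3, n1, (n1-n3)/2, A2, Ep, d2p, Or.inr ⟨rfl, rfl⟩, by omega, by omega, by omega,
        hh.1, hh.2.1, hh.2.2.1, hh.2.2.2.1, hh.2.2.2.2⟩
  obtain ⟨hd2p, hd2p1⟩ := hd2p
  set D0 := max dN d2p with hD0
  have hdND : dN ≤ D0 := le_max_left _ _
  have hd2pD : d2p ≤ D0 := le_max_right _ _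
  have hDq : q + 1 ≤ D0 := le_trans hdNq hdND
  -- the uniform lower bound constant
  set cR : ℝ := ((D0 + q + 3 : ℕ) : ℝ) / ((D0*(2*q+3) : ℕ) : ℝ) with hcR
  have hD0pos : 0 < D0 := by omega
  have hcRpos : 0 < cR := by
    apply div_pos
    · have h' : (0:ℕ) < D0 + q + 3 := by omega
      exact_mod_cast h'
    · have h' : (0:ℕ) < D0*(2*q+3) := by positivity
      exact_mod_cast h'
  -- MAIN PER-ELEMENT BOUND
  have main : ∀ n : ℕ, 2 ≤ (lengthSet ![4,n1,n2,n3] n).ncard → cR ≤ LD ![4,n1,n2,n3] n := by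
    intro n hcard
    have hfin := lengthSet_finite_s16 h1 h2 h3 (n1 := n1) (n2 := n2) (n3 := n3) n
    have hne : (lengthSet ![4,n1,n2,n3] n).Nonempty :=
      Set.nonempty_of_ncard_ne_zero (by omega)
    have hn0 : n ≠ 0 := by
      rintro rfl
      have hsub : lengthSet ![4,n1,n2,n3] 0 ⊆ {0} := by
        intro ℓ hℓ
        obtain ⟨a,b,c,d,hv,hlen⟩ := length_elim hℓ
        have hb : b ≤ b*n1 := Nat.le_mul_of_pos_right b (by omega)
        have hc : c ≤ c*n2 := Nat.le_mul_of_pos_right c (by omega)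
        have hd : d ≤ d*n3 := Nat.le_mul_of_pos_right d (by omega)
        simp only [Set.mem_singleton_iff]
        omega
      have hle1 := Set.ncard_le_ncard hsub (Set.finite_singleton 0)
      simp [Set.ncard_singleton] at hle1
      omega
    obtain ⟨r, e, b0, c0, d0, hre, hr4, hpat, hpe, he1⟩ :
        ∃ r e b0 c0 d0, ((n % 4 = 0 ∧ r = 0 ∧ e = 0) ∨ (n % 4 = 1 ∧ r = n1 ∧ e = 1) ∨
          (n % 4 = 2 ∧ r = n2 ∧ e = 1) ∨ (n % 4 = 3 ∧ r = n3 ∧ e = 1)) ∧ r % 4 = n % 4 ∧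
          b0*n1 + c0*n2 + d0*n3 = r ∧ b0 + c0 + d0 = e ∧ e ≤ 1 := by
      have h4 : n % 4 = 0 ∨ n % 4 = 1 ∨ n % 4 = 2 ∨ n % 4 = 3 := by omega
      rcases h4 with h|h|h|h
      · exact ⟨0, 0, 0, 0, 0, Or.inl ⟨h, rfl, rfl⟩, by omega, by ring, by ring, by omega⟩
      · exact ⟨n1, 1, 1, 0, 0, Or.inr (Or.inl ⟨h, rfl, rfl⟩), by omega, by ring, by ring, by omega⟩
      · exact ⟨n2, 1, 0, 1, 0, Or.inr (Or.inr (Or.inl ⟨h, rfl, rfl⟩)), by omega, by ring,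
          by ring, by omega⟩
      · exact ⟨n3, 1, 0, 0, 1, Or.inr (Or.inr (Or.inr ⟨h, rfl, rfl⟩)), by omega, by ring,
          by ring, by omega⟩
    have hmax : ∀ ℓ ∈ lengthSet ![4,n1,n2,n3] n, 4*ℓ + r ≤ n + 4*e := by
      intro ℓ hℓ
      obtain ⟨a,b,c,d,hv,hlen⟩ := length_elim hℓ
      have hcl := class_mod hm1 hm2 hm3 hv
      rcases hre with ⟨h,hr,he⟩|⟨h,hr,he⟩|⟨h,hr,he⟩|⟨h,hr,he⟩
      · have := wb0 h1 h2 h3 (n1 := n1) (n2 := n2) (n3 := n3) b c d; omega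
      · have := wb1 h1 h2 h3 hm1 hm2 hm3 hc3 hn3 b c d (by omega); omega
      · have := wb2 h1 h2 h3 hm1 hm2 hm3 hc1 hc4 b c d (by omega); omega
      · have := wb3 h1 h2 h3 hm1 hm2 hm3 hc2 hn1 b c d (by omega); omega
    have hrn : r ≤ n := by
      obtain ⟨ℓ, hℓ⟩ := hne
      obtain ⟨a,b,c,d,hv,hlen⟩ := length_elim hℓ
      have hcl := class_mod hm1 hm2 hm3 hv
      have hb : 4*b ≤ b*n1 := mul_ge h1.le
      have hc : 4*c ≤ c*n2 := mul_ge h2.le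
      have hd : 4*d ≤ d*n3 := mul_ge h3.le
      rcases hre with ⟨h,hr,he⟩|⟨h,hr,he⟩|⟨h,hr,he⟩|⟨h,hr,he⟩
      · omega
      · have h5 := wb1 h1 h2 h3 hm1 hm2 hm3 hc3 hn3 b c d (by omega); omega
      · have h5 := wb2 h1 h2 h3 hm1 hm2 hm3 hc1 hc4 b c d (by omega); omega
      · have h5 := wb3 h1 h2 h3 hm1 hm2 hm3 hc2 hn1 b c d (by omega); omega
    obtain ⟨A, hA⟩ : ∃ A, n = 4*A + r := ⟨(n-r)/4, by omega⟩
    obtain ⟨J, ρ, hJ, hρ⟩ : ∃ J ρ, A = J*(q+2) + ρ ∧ ρ < q+2 := by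
      refine ⟨A/(q+2), A%(q+2), ?_, Nat.mod_lt _ (by omega)⟩
      have h' := Nat.div_add_mod A (q+2)
      have h'' : (q+2)*(A/(q+2)) = (A/(q+2))*(q+2) := Nat.mul_comm _ _
      omega
    set bot := 2*J + ρ + e with hbot
    have hJq : J*(q+2) = J*q + 2*J := by ring
    have hap : ∀ i, i ≤ J → bot + i*q ∈ lengthSet ![4,n1,n2,n3] n := by
      intro i hi
      obtain ⟨jj, hjj⟩ : ∃ jj, J = i + jj := ⟨J - i, by omega⟩
      have hval : (i*(q+2) + ρ)*4 + b0*n1 + (c0 + 2*jj)*n2 + d0*n3 = n := by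
        have e1 : (c0 + 2*jj)*n2 = c0*n2 + 2*(jj*n2) := by ring
        have e2 : jj*n2 = 2*(jj*(q+2)) := by rw [hqn2]; ring
        have e5 : J*(q+2) = i*(q+2) + jj*(q+2) := by rw [hjj]; ring
        have e4 : (i*(q+2) + ρ)*4 = 4*(i*(q+2)) + 4*ρ := by ring
        omega
      have hlen : (i*(q+2) + ρ) + b0 + (c0 + 2*jj) + d0 = bot + i*q := by
        have e1 : i*(q+2) = i*q + 2*i := by ring
        omega
      have hmem := mem_length hval
      rwa [hlen] at hmem
    set Mx := sSup (lengthSet ![4,n1,n2,n3] n) with hMxdef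
    set mx := sInf (lengthSet ![4,n1,n2,n3] n) with hmxdef
    have hbdd := hfin.bddAbove
    have hMmem : Mx ∈ lengthSet ![4,n1,n2,n3] n := Nat.sSup_mem hne hbdd
    have hmmem : mx ∈ lengthSet ![4,n1,n2,n3] n := Nat.sInf_mem hne
    have hMle : ∀ ℓ ∈ lengthSet ![4,n1,n2,n3] n, ℓ ≤ Mx := fun ℓ h => le_csSup hbdd h
    have hmle : ∀ ℓ ∈ lengthSet ![4,n1,n2,n3] n, mx ≤ ℓ := fun ℓ h => Nat.sInf_le h
    have hbotJ : bot + J*q = A + e := by omega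
    have hMA : Mx = A + e := by
      have hup := hmax Mx hMmem
      have hlow : A + e ≤ Mx := by
        have h' := hap J le_rfl
        rw [hbotJ] at h'
        exact hMle _ h'
      omega
    have hmbot : mx ≤ bot := by
      have h' := hmle _ (hap 0 (Nat.zero_le J))
      simpa using h'
    have hm1' : 1 ≤ mx := by
      rcases Nat.eq_zero_or_pos mx with h0 | h0
      · exfalso
        obtain ⟨a,b,c,d,hv,hlen⟩ := length_elim (h0 ▸ hmmem)
        have hz : a = 0 ∧ b = 0 ∧ c = 0 ∧ d = 0 := by omega
        obtain ⟨rfl,rfl,rfl,rfl⟩ := hz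
        simp at hv
        omega
      · exact h0
    have hmM : mx < Mx := by
      by_contra hcon
      push_neg at hcon
      have hsub : lengthSet ![4,n1,n2,n3] n ⊆ {mx} := by
        intro ℓ h
        have := hMle ℓ h
        have := hmle ℓ h
        simp only [Set.mem_singleton_iff]
        omega
      have hle1 := Set.ncard_le_ncard hsub (Set.finite_singleton _)
      simp [Set.ncard_singleton] at hle1
      omega
    have ascent : ∀ ℓ ∈ lengthSet ![4,n1,n2,n3] n, ℓ < bot →
        ∃ ℓ' ∈ lengthSet ![4,n1,n2,n3] n, ℓ < ℓ' ∧ ℓ' ≤ ℓ + D0 := by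
      intro ℓ hℓ hlt
      exact ascent_lem h1 h2 h3 hm1 hm2 hm3 hc2 hc3 hqn2 hq1 hk hE1 hdN hdNq hpP hPp
        hδ1 hδq h2p hEp1 hd2p hd2p1 hdND hd2pD hDq hre hA ℓ hℓ (by omega)
    have count : ∀ dist : ℕ, ∀ ℓ ∈ lengthSet ![4,n1,n2,n3] n, ℓ < bot → bot ≤ ℓ + dist →
        ∃ F : Finset ℕ, (∀ x ∈ F, x ∈ lengthSet ![4,n1,n2,n3] n ∧ ℓ ≤ x ∧ x < bot) ∧
          ℓ ∈ F ∧ bot ≤ ℓ + F.card * D0 := by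
      intro dist
      induction dist using Nat.strong_induction_on with
      | _ dist IH =>
        intro ℓ hℓ hlb hbl
        obtain ⟨ℓ', hℓ'L, hgt, hle⟩ := ascent ℓ hℓ hlb
        by_cases hcase : bot ≤ ℓ'
        · refine ⟨{ℓ}, ?_, Finset.mem_singleton_self ℓ, ?_⟩
          · intro x hx
            rw [Finset.mem_singleton] at hx
            subst hx
            exact ⟨hℓ, le_refl _, hlb⟩
          · simp only [Finset.card_singleton]
            omega
        · push_neg at hcase
          have hlt2 : dist - (ℓ' - ℓ) < dist := by omega
          obtain ⟨F', hF1, hF2, hF3⟩ := IH _ hlt2 ℓ' hℓ'L hcase (by omega)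
          have hnm : ℓ ∉ F' := fun hmem => by
            have := (hF1 ℓ hmem).2.1
            omega
          refine ⟨insert ℓ F', ?_, Finset.mem_insert_self _ _, ?_⟩
          · intro x hx
            rcases Finset.mem_insert.1 hx with rfl | hx'
            · exact ⟨hℓ, le_refl _, hlb⟩
            · obtain ⟨ha, hb', hc'⟩ := hF1 x hx'
              exact ⟨ha, by omega, hc'⟩
          · rw [Finset.card_insert_of_notMem hnm]
            have hexp : (F'.card + 1)*D0 = F'.card*D0 + D0 := by ring
            omega
    have hinj : ∀ x y : ℕ, bot + x*q = bot + y*q → x = y := by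
      intro x y hxy
      have hxq : x*q = y*q := by omega
      exact Nat.eq_of_mul_eq_mul_right (by omega) hxq
    set Fh : Finset ℕ := (Finset.range (J+1)).image (fun i => bot + i*q) with hFh
    have hFhcard : Fh.card = J + 1 := by
      rw [hFh, Finset.card_image_of_injective _ (fun x y h => hinj x y h), Finset.card_range]
    have hFhmem : ∀ x ∈ Fh, x ∈ lengthSet ![4,n1,n2,n3] n ∧ bot ≤ x := by
      intro x hx
      rw [hFh, Finset.mem_image] at hx
      obtain ⟨i, hi, rfl⟩ := hx
      rw [Finset.mem_range] at hi
      exact ⟨hap i (by omega), Nat.le_add_right _ _⟩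
    have hcnt_ge : ∀ F : Finset ℕ, (∀ x ∈ F, x ∈ lengthSet ![4,n1,n2,n3] n) →
        F.card ≤ (lengthSet ![4,n1,n2,n3] n).ncard := by
      intro F hF
      have hsub : (F : Set ℕ) ⊆ lengthSet ![4,n1,n2,n3] n := fun x hx => hF x (by exact_mod_cast hx)
      have := Set.ncard_le_ncard hsub hfin
      simpa [Set.ncard_coe_finset] using this
    have hstep : q*(D0+q+3) ≤ D0*(2*q+3) := by
      have h' : (q+3)*q ≤ (q+3)*D0 := Nat.mul_le_mul_left _ (by omega)
      have e1 : q*(D0+q+3) = q*D0 + (q+3)*q := by ring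
      have e2 : D0*(2*q+3) = q*D0 + (q+3)*D0 := by ring
      omega
    have hkey : (Mx - mx)*(D0 + q + 3) ≤
        ((lengthSet ![4,n1,n2,n3] n).ncard - 1)*(D0*(2*q+3)) := by
      rcases eq_or_lt_of_le hmbot with hmb | hmb
      · -- the minimum is the bottom of the top AP
        have hJ1 : 1 ≤ J := by
          by_contra h0
          push_neg at h0
          have hJ0 : J = 0 := by omega
          have hJqq : J*(q+2) = 0 := by rw [hJ0]; ring
          omega
        have hspan : Mx - mx = J*q := by omega
        have hcnt : J + 1 ≤ (lengthSet ![4,n1,n2,n3] n).ncard := by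
          have h' := hcnt_ge Fh (fun x hx => (hFhmem x hx).1)
          omega
        calc (Mx - mx)*(D0+q+3) = J*(q*(D0+q+3)) := by rw [hspan]; ring
        _ ≤ J*(D0*(2*q+3)) := Nat.mul_le_mul_left _ hstep
        _ ≤ ((lengthSet ![4,n1,n2,n3] n).ncard - 1)*(D0*(2*q+3)) :=
            Nat.mul_le_mul_right _ (by omega)
      · obtain ⟨F, hF1, hF2, hF3⟩ := count (bot - mx) mx hmmem hmb (by omega)
        have hYpos : 1 ≤ F.card := Finset.card_pos.mpr ⟨mx, hF2⟩
        have hdisj : Disjoint F Fh := by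
          rw [Finset.disjoint_left]
          intro x hxF hxFh
          have hxb := (hF1 x hxF).2.2
          have hbx := (hFhmem x hxFh).2
          omega
        have hcnt : F.card + (J + 1) ≤ (lengthSet ![4,n1,n2,n3] n).ncard := by
          have hsub : ∀ x ∈ F ∪ Fh, x ∈ lengthSet ![4,n1,n2,n3] n := by
            intro x hx
            rcases Finset.mem_union.1 hx with h|h
            · exact (hF1 x h).1
            · exact (hFhmem x h).1
          have h' := hcnt_ge _ hsub
          rwa [Finset.card_union_of_disjoint hdisj, hFhcard] at h'
        have hXY : bot - mx ≤ F.card*D0 := by omega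
        have hspan : Mx - mx = J*q + (bot - mx) := by omega
        rcases Nat.eq_zero_or_pos J with hJ0 | hJ1
        · have hm2 : 2 ≤ mx := by
            by_contra hcon
            push_neg at hcon
            have hmx1 : mx = 1 := by omega
            obtain ⟨a,b,c,d,hv,hlen⟩ := length_elim (hmx1 ▸ hmmem)
            have hcases : (a=1∧b=0∧c=0∧d=0) ∨ (b=1∧a=0∧c=0∧d=0) ∨
                (c=1∧a=0∧b=0∧d=0) ∨ (d=1∧a=0∧b=0∧c=0) := by omega
            rcases hcases with ⟨rfl,rfl,rfl,rfl⟩|⟨rfl,rfl,rfl,rfl⟩|⟨rfl,rfl,rfl,rfl⟩|⟨rfl,rfl,rfl,rfl⟩ <;>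
              simp at hv <;>
              rcases hre with ⟨h,hr,he⟩|⟨h,hr,he⟩|⟨h,hr,he⟩|⟨h,hr,he⟩ <;> omega
          have hJqq : J*q = 0 := by rw [hJ0]; ring
          have hJqq2 : J*(q+2) = 0 := by rw [hJ0]; ring
          have hXq : bot - mx ≤ q := by omega
          have h1' : (bot - mx)*(D0+q+3) ≤ q*(D0+q+3) := Nat.mul_le_mul_right _ hXq
          have h2' : D0*(2*q+3) ≤ ((lengthSet ![4,n1,n2,n3] n).ncard - 1)*(D0*(2*q+3)) :=
            Nat.le_mul_of_pos_left _ (by omega)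
          calc (Mx - mx)*(D0+q+3) = (bot - mx)*(D0+q+3) := by rw [hspan, hJqq]; ring_nf
          _ ≤ q*(D0+q+3) := h1'
          _ ≤ D0*(2*q+3) := hstep
          _ ≤ ((lengthSet ![4,n1,n2,n3] n).ncard - 1)*(D0*(2*q+3)) := h2'
        · have hXle : bot - mx ≤ 2*J + q + 1 := by omega
          obtain ⟨t, ht1, ht2⟩ : ∃ t, D0 = q + t ∧ 1 ≤ t := ⟨D0 - q, by omega, by omega⟩
          obtain ⟨s, hs⟩ : ∃ s, (q+3)*J = (bot - mx) + s := by
            refine ⟨(q+3)*J - (bot - mx), ?_⟩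
            have e' : (q+3)*J = 2*J + (q+1)*J := by ring
            have l' : q+1 ≤ (q+1)*J := Nat.le_mul_of_pos_right _ (by omega)
            omega
          have hident : (J*q + J*t + (bot - mx))*(2*q+3) + t*(bot - mx) =
              (J*q + (bot - mx))*(2*q+t+3) + t*((q+3)*J) := by ring
          have hts : t*((q+3)*J) = t*(bot - mx) + t*s := by rw [hs]; ring
          have hmain2 : (J*q + (bot - mx))*(D0+q+3) ≤ (J*D0 + (bot - mx))*(2*q+3) := by
            have e1 : J*D0 = J*q + J*t := by rw [ht1]; ring
            have e2 : D0 + q + 3 = 2*q + t + 3 := by omega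
            rw [e1, e2]
            omega
          have hchain : (J*D0 + (bot - mx))*(2*q+3) ≤ (J + F.card)*(D0*(2*q+3)) := by
            have e1 : (J+F.card)*(D0*(2*q+3)) = (J*D0 + F.card*D0)*(2*q+3) := by ring
            have e2 : J*D0 + (bot - mx) ≤ J*D0 + F.card*D0 := by omega
            rw [e1]
            exact Nat.mul_le_mul_right _ e2
          have hcnt' : J + F.card ≤ (lengthSet ![4,n1,n2,n3] n).ncard - 1 := by omega
          calc (Mx-mx)*(D0+q+3) = (J*q + (bot - mx))*(D0+q+3) := by rw [hspan]
          _ ≤ (J*D0 + (bot - mx))*(2*q+3) := hmain2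
          _ ≤ (J + F.card)*(D0*(2*q+3)) := hchain
          _ ≤ ((lengthSet ![4,n1,n2,n3] n).ncard - 1)*(D0*(2*q+3)) :=
              Nat.mul_le_mul_right _ hcnt'
    -- conversion to the reals
    have hMc : (mx:ℝ) < (Mx:ℝ) := by exact_mod_cast hmM
    have hden : (0:ℝ) < (Mx:ℝ) - (mx:ℝ) := by linarith
    have hdenc : (0:ℝ) < ((D0*(2*q+3) : ℕ) : ℝ) := by
      have h' : (0:ℕ) < D0*(2*q+3) := by positivity
      exact_mod_cast h'
    rw [LD, hcR]
    rw [div_le_div_iff₀ hdenc hden]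
    have hcast1 : (Mx:ℝ) - (mx:ℝ) = ((Mx - mx : ℕ) : ℝ) := by
      rw [Nat.cast_sub hmM.le]
    have hcast2 : ((lengthSet ![4,n1,n2,n3] n).ncard : ℝ) - 1 =
        (((lengthSet ![4,n1,n2,n3] n).ncard - 1 : ℕ) : ℝ) := by
      rw [Nat.cast_sub (by omega), Nat.cast_one]
    rw [hcast1, hcast2]
    have hkey' : ((Mx - mx : ℕ) : ℝ) * ((D0 + q + 3 : ℕ) : ℝ) ≤
        (((lengthSet ![4,n1,n2,n3] n).ncard - 1 : ℕ) : ℝ) * ((D0*(2*q+3) : ℕ) : ℝ) := by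
      exact_mod_cast hkey
    linarith [hkey']
  -- characterization of the length set of n1+n3
  have hmodN : (n1 + n3) % 4 = 0 := by omega
  have charN : ∀ ℓ ∈ lengthSet ![4,n1,n2,n3] (n1+n3), ℓ = 2 ∨ 2 + dN ≤ ℓ := by
    intro ℓ hℓ
    obtain ⟨a,b,c,d,hv,hlen⟩ := length_elim hℓ
    have hcl := class_mod hm1 hm2 hm3 hv
    rw [hmodN] at hcl
    have hdis : (2 ≤ b ∧ 1 ≤ d) ∨ (1 ≤ b ∧ 2 ≤ d) ∨ (3 ≤ b ∧ d = 0) ∨ (b = 0 ∧ 3 ≤ d) ∨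
        (b=1∧d=1) ∨ (b=2∧d=0) ∨ (b=0∧d=2) ∨ (b=1∧d=0) ∨ (b=0∧d=1) ∨ (b=0∧d=0) := by omega
    rcases hdis with ⟨hb,hd⟩|⟨hb,hd⟩|⟨hb,rfl⟩|⟨rfl,hd⟩|⟨rfl,rfl⟩|⟨rfl,rfl⟩|⟨rfl,rfl⟩|⟨rfl,rfl⟩|⟨rfl,rfl⟩|⟨rfl,rfl⟩
    · exfalso
      obtain ⟨b', rfl⟩ : ∃ b', b = b'+2 := ⟨b-2, by omega⟩
      obtain ⟨d', rfl⟩ : ∃ d', d = d'+1 := ⟨d-1, by omega⟩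
      have e1 : (b'+2)*n1 = b'*n1 + 2*n1 := by ring
      have e2 : (d'+1)*n3 = d'*n3 + n3 := by ring
      have hcge : c ≤ c*n2 := Nat.le_mul_of_pos_right c (by omega)
      omega
    · exfalso
      obtain ⟨b', rfl⟩ : ∃ b', b = b'+1 := ⟨b-1, by omega⟩
      obtain ⟨d', rfl⟩ : ∃ d', d = d'+2 := ⟨d-2, by omega⟩
      have e1 : (b'+1)*n1 = b'*n1 + n1 := by ring
      have e2 : (d'+2)*n3 = d'*n3 + 2*n3 := by ring
      omega
    · exfalso
      obtain ⟨b', rfl⟩ : ∃ b', b = b'+3 := ⟨b-3, by omega⟩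
      have e1 : (b'+3)*n1 = b'*n1 + 3*n1 := by ring
      omega
    · exfalso
      obtain ⟨d', rfl⟩ : ∃ d', d = d'+3 := ⟨d-3, by omega⟩
      have e2 : (d'+3)*n3 = d'*n3 + 3*n3 := by ring
      omega
    · left
      norm_num at hv
      have hcn2 : c ≤ c*n2 := Nat.le_mul_of_pos_right c (by omega)
      omega
    · exfalso
      norm_num at hv hcl
      obtain ⟨c', rfl⟩ : ∃ c', c = 2*c'+1 := ⟨c/2, by omega⟩
      have e1 : (2*c'+1)*n2 = 2*(c'*n2) + n2 := by ring
      omega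
    · exfalso
      norm_num at hv hcl
      obtain ⟨c', rfl⟩ : ∃ c', c = 2*c'+1 := ⟨c/2, by omega⟩
      have e1 : (2*c'+1)*n2 = 2*(c'*n2) + n2 := by ring
      omega
    · exfalso
      norm_num at hv
      have e1 : c*n2 = 2*(c*(q+2)) := by rw [hqn2]; ring
      omega
    · exfalso
      norm_num at hv
      have e1 : c*n2 = 2*(c*(q+2)) := by rw [hqn2]; ring
      omega
    · right
      norm_num at hv hcl
      obtain ⟨f, rfl⟩ : ∃ f, c = 2*f := ⟨c/2, by omega⟩
      have e1 : 2*f*n2 = 4*(f*(q+2)) := by rw [hqn2]; ring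
      have hfE : f ≤ E := by
        by_contra hgt
        push_neg at hgt
        have hmm : (E+1)*(q+2) ≤ f*(q+2) := Nat.mul_le_mul_right _ (by omega)
        have hE2exp : (E+1)*(q+2) = E*(q+2) + (q+2) := by ring
        omega
      have hmono : f*q ≤ E*q := Nat.mul_le_mul_right _ hfE
      have e3 : f*(q+2) = f*q + 2*f := by ring
      omega
  -- characterization of the length set of 2p
  have hmod2p : (2*p) % 4 = 2 := by
    rcases hpP with ⟨rfl,_⟩|⟨rfl,_⟩ <;> omega
  have char2p : ∀ ℓ ∈ lengthSet ![4,n1,n2,n3] (2*p), ℓ = 2 ∨ 2 + d2p ≤ ℓ := by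
    intro ℓ hℓ
    obtain ⟨a,b,c,d,hv,hlen⟩ := length_elim hℓ
    have hcl := class_mod hm1 hm2 hm3 hv
    rw [hmod2p] at hcl
    obtain ⟨m3, hm3'⟩ : ∃ m3, n3 = 2*m3 + 1 := ⟨n3/2, by omega⟩
    have hdn3 : d*n3 = 2*(d*m3) + d := by rw [hm3']; ring
    have hcn2ev : c*n2 = 2*(c*(q+2)) := by rw [hqn2]; ring
    rcases hpP with ⟨hp1, hP3⟩|⟨hp3, hP1⟩
    · -- p = n1 and n3 = n1 + 2δ
      have hn31 : n3 = n1 + 2*δ := by rw [← hP3, hPp, hp1]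
      rw [hp1] at hv
      have hdis : (1 ≤ b ∧ 1 ≤ d) ∨ 2 ≤ d ∨ (d = 1 ∧ b = 0) ∨ (d = 0 ∧ 3 ≤ b) ∨
          (d=0 ∧ b=2) ∨ (d=0 ∧ b=1) ∨ (d=0 ∧ b=0) := by omega
      rcases hdis with ⟨hb,hd⟩|hd|⟨rfl,rfl⟩|⟨rfl,hb⟩|⟨rfl,rfl⟩|⟨rfl,rfl⟩|⟨rfl,rfl⟩
      · exfalso
        obtain ⟨b', rfl⟩ : ∃ b', b = b'+1 := ⟨b-1, by omega⟩
        obtain ⟨d', rfl⟩ : ∃ d', d = d'+1 := ⟨d-1, by omega⟩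
        have e1 : (b'+1)*n1 = b'*n1 + n1 := by ring
        have e2 : (d'+1)*n3 = d'*n3 + n3 := by ring
        omega
      · exfalso
        obtain ⟨d', rfl⟩ : ∃ d', d = d'+2 := ⟨d-2, by omega⟩
        have e2 : (d'+2)*n3 = d'*n3 + 2*n3 := by ring
        omega
      · exfalso
        norm_num at hv
        omega
      · exfalso
        obtain ⟨b', rfl⟩ : ∃ b', b = b'+3 := ⟨b-3, by omega⟩
        have e1 : (b'+3)*n1 = b'*n1 + 3*n1 := by ring
        omega
      · left
        norm_num at hv
        have hcn2 : c ≤ c*n2 := Nat.le_mul_of_pos_right c (by omega)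
        omega
      · exfalso
        norm_num at hv
        omega
      · right
        norm_num at hv hcl
        obtain ⟨f, rfl⟩ : ∃ f, c = 2*f + 1 := ⟨c/2, by omega⟩
        have e1 : (2*f+1)*n2 = 4*(f*(q+2)) + n2 := by rw [hqn2]; ring
        have h2n1 : 2*n1 = 4*A2 + n2 := by rw [← hp1]; exact h2p
        have hfE : f ≤ Ep := by
          by_contra hgt
          push_neg at hgt
          have hmm : (Ep+1)*(q+2) ≤ f*(q+2) := Nat.mul_le_mul_right _ (by omega)
          have hE2exp : (Ep+1)*(q+2) = Ep*(q+2) + (q+2) := by ring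
          omega
        have hmono : f*q ≤ Ep*q := Nat.mul_le_mul_right _ hfE
        have e3 : f*(q+2) = f*q + 2*f := by ring
        omega
    · -- p = n3 and n1 = n3 + 2δ
      have hn13 : n1 = n3 + 2*δ := by rw [← hP1, hPp, hp3]
      rw [hp3] at hv
      have hdis : 2 ≤ b ∨ (b = 1) ∨ (b = 0 ∧ 3 ≤ d) ∨ (b = 0 ∧ d = 2) ∨
          (b = 0 ∧ d = 1) ∨ (b = 0 ∧ d = 0) := by omega
      rcases hdis with hb|rfl|⟨rfl,hd⟩|⟨rfl,rfl⟩|⟨rfl,rfl⟩|⟨rfl,rfl⟩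
      · exfalso
        obtain ⟨b', rfl⟩ : ∃ b', b = b'+2 := ⟨b-2, by omega⟩
        have e1 : (b'+2)*n1 = b'*n1 + 2*n1 := by ring
        omega
      · exfalso
        -- b = 1 : parity forces d odd hence d ≥ 1, then size contradiction
        have hdodd : d % 2 = 1 := by omega
        obtain ⟨d', rfl⟩ : ∃ d', d = d'+1 := ⟨d-1, by omega⟩
        have e2 : (d'+1)*n3 = d'*n3 + n3 := by ring
        omega
      · exfalso
        obtain ⟨d', rfl⟩ : ∃ d', d = d'+3 := ⟨d-3, by omega⟩
        have e2 : (d'+3)*n3 = d'*n3 + 3*n3 := by ring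
        omega
      · left
        norm_num at hv
        have hcn2 : c ≤ c*n2 := Nat.le_mul_of_pos_right c (by omega)
        omega
      · exfalso
        norm_num at hv
        omega
      · right
        norm_num at hv hcl
        obtain ⟨f, rfl⟩ : ∃ f, c = 2*f + 1 := ⟨c/2, by omega⟩
        have e1 : (2*f+1)*n2 = 4*(f*(q+2)) + n2 := by rw [hqn2]; ring
        have h2n3 : 2*n3 = 4*A2 + n2 := by rw [← hp3]; exact h2p
        have hfE : f ≤ Ep := by
          by_contra hgt
          push_neg at hgt
          have hmm : (Ep+1)*(q+2) ≤ f*(q+2) := Nat.mul_le_mul_right _ (by omega)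
          have hE2exp : (Ep+1)*(q+2) = Ep*(q+2) + (q+2) := by ring
          omega
        have hmono : f*q ≤ Ep*q := Nat.mul_le_mul_right _ hfE
        have e3 : f*(q+2) = f*q + 2*f := by ring
        omega
  -- D0 is an element of the Delta set
  have h2memN : 2 ∈ lengthSet ![4,n1,n2,n3] (n1+n3) := by
    have hval : 0*4 + 1*n1 + 0*n2 + 1*n3 = n1+n3 := by ring
    have hm := mem_length hval
    norm_num at hm
    exact hm
  have hgap : D0 ∈ Delta ![4,n1,n2,n3] := by
    rcases le_or_gt d2p dN with hdle | hdlt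
    · have hD0dN : D0 = dN := by rw [hD0, max_eq_left hdle]
      have hbmem : 2 + dN ∈ lengthSet ![4,n1,n2,n3] (n1+n3) := by
        obtain ⟨u, hu⟩ : ∃ u, k = E*(q+2) + u := ⟨k - E*(q+2), by omega⟩
        have hEexp : E*(q+2) = E*q + 2*E := by ring
        have hval : u*4 + 0*n1 + (2*E)*n2 + 0*n3 = n1+n3 := by
          have e1 : 2*E*n2 = 4*(E*(q+2)) := by rw [hqn2]; ring
          omega
        have hm := mem_length hval
        have hlen2 : u + 0 + 2*E + 0 = 2 + dN := by omega
        rwa [hlen2] at hm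
      rw [hD0dN]
      refine Set.mem_iUnion.2 ⟨n1+n3, 2, h2memN, 2+dN, hbmem, by omega, ?_, by omega⟩
      intro cc hcc
      rcases charN cc hcc with rfl | h' <;> omega
    · have hD0d2p : D0 = d2p := by rw [hD0, max_eq_right hdlt.le]
      have h2mem : 2 ∈ lengthSet ![4,n1,n2,n3] (2*p) := by
        rcases hpP with ⟨hp1, _⟩|⟨hp3, _⟩
        · have hval : 0*4 + 2*n1 + 0*n2 + 0*n3 = 2*p := by rw [hp1]; ring
          have hm := mem_length hval
          norm_num at hm
          exact hm
        · have hval : 0*4 + 0*n1 + 0*n2 + 2*n3 = 2*p := by rw [hp3]; ring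
          have hm := mem_length hval
          norm_num at hm
          exact hm
      have hbmem : 2 + d2p ∈ lengthSet ![4,n1,n2,n3] (2*p) := by
        obtain ⟨u2, hu2⟩ : ∃ u2, A2 = Ep*(q+2) + u2 := ⟨A2 - Ep*(q+2), by omega⟩
        have hEexp : Ep*(q+2) = Ep*q + 2*Ep := by ring
        have hval : u2*4 + 0*n1 + (2*Ep+1)*n2 + 0*n3 = 2*p := by
          have e1 : (2*Ep+1)*n2 = 4*(Ep*(q+2)) + n2 := by rw [hqn2]; ring
          omega
        have hm := mem_length hval
        have hlen2 : u2 + 0 + (2*Ep+1) + 0 = 2 + d2p := by omega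
        rwa [hlen2] at hm
      rw [hD0d2p]
      refine Set.mem_iUnion.2 ⟨2*p, 2, h2mem, 2+d2p, hbmem, by omega, ?_, by omega⟩
      intro cc hcc
      rcases char2p cc hcc with rfl | h' <;> omega
  -- the defining set of LDsgp is nonempty
  have hNcard : 2 ≤ (lengthSet ![4,n1,n2,n3] (n1+n3)).ncard := by
    have hkmem : k ∈ lengthSet ![4,n1,n2,n3] (n1+n3) := by
      have hval : k*4 + 0*n1 + 0*n2 + 0*n3 = n1+n3 := by omega
      have hm := mem_length hval
      norm_num at hm
      exact hm
    have hlt := (Set.one_lt_ncard_iff (lengthSet_finite_s16 h1 h2 h3 (n1+n3))).2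
      ⟨2, k, h2memN, hkmem, by omega⟩
    omega
  have hLDsgp : cR ≤ LDsgp ![4,n1,n2,n3] := by
    refine le_csInf ⟨LD ![4,n1,n2,n3] (n1+n3), ⟨n1+n3, hNcard, rfl⟩⟩ ?_
    rintro x ⟨nn, hc2', rfl⟩
    exact main nn hc2'
  show LDsgp ![4,n1,n2,n3] > 1 / ((sSup (Delta ![4,n1,n2,n3]) : ℕ) : ℝ)
  by_cases hbdd : BddAbove (Delta ![4,n1,n2,n3])
  · have hle : D0 ≤ sSup (Delta ![4,n1,n2,n3]) := le_csSup hbdd hgap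
    have hpos : (0:ℝ) < (D0:ℝ) := by exact_mod_cast hD0pos
    have hdencpos : (0:ℝ) < ((D0*(2*q+3) : ℕ) : ℝ) := by
      have h' : (0:ℕ) < D0*(2*q+3) := by positivity
      exact_mod_cast h'
    have h1' : 1/((sSup (Delta ![4,n1,n2,n3]) : ℕ):ℝ) ≤ 1/(D0:ℝ) := by
      apply one_div_le_one_div_of_le hpos
      exact_mod_cast hle
    have h2' : 1/(D0:ℝ) < cR := by
      rw [hcR, div_lt_div_iff₀ hpos hdencpos, one_mul]
      have hnat : D0*(2*q+3) < (D0+q+3)*D0 := by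
        have hlt2 : 2*q+3 < D0+q+3 := by omega
        calc D0*(2*q+3) < D0*(D0+q+3) := (Nat.mul_lt_mul_left hD0pos).2 hlt2
        _ = (D0+q+3)*D0 := Nat.mul_comm _ _
      exact_mod_cast hnat
    linarith
  · rw [csSup_of_not_bddAbove hbdd]
    have hz : ((sSup (∅ : Set ℕ) : ℕ) : ℝ) = 0 := by simp
    rw [hz]
    simp only [div_zero]
    exact lt_of_lt_of_le hcRpos hLDsgp

end LengthDensity
end
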